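/- arXiv:1310.7048 — 15 statements merged into one kernel-verified Lean document; each statement's English description precedes it below -/
import Mathlib

section
/- Let φ : ℝ → ℝ be continuous, nonnegative, and sublinear, i.e., convex and positively homogeneous (φ(t·x) = t·φ(x) for all x ∈ ℝ and all t > 0). Define the conjugate φ* : ℝ → EReal by φ*(s) = ⨆_{t ∈ ℝ} ↑(s·t − φ(t)) and the biconjugate φ** : ℝ → EReal by φ**(x) = ⨆_{s ∈ ℝ} (↑(x·s) − φ*(s)), where arithmetic is in the extended reals. Then φ**(x) = ↑(φ(x)) for every x ∈ ℝ. -/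
/-- For a continuous, nonnegative, sublinear (convex and positively
homogeneous) function `φ : ℝ → ℝ`, the biconjugate `φ**` (computed in the extended
reals) equals `φ`. -/
theorem biconjugate_of_sublinear (φ : ℝ → ℝ)
    (hcont : Continuous φ)
    (hnonneg : ∀ t : ℝ, 0 ≤ φ t)
    (hconv : ConvexOn ℝ Set.univ φ)
    (hhom : ∀ x : ℝ, ∀ t : ℝ, 0 < t → φ (t * x) = t * φ x) :
    ∀ x : ℝ,
      (⨆ s : ℝ, ((x * s : ℝ) : EReal) - ⨆ t : ℝ, ((s * t - φ t : ℝ) : EReal))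
        = ((φ x : ℝ) : EReal) := by
  intro x
  set a : ℝ := -φ (-1) with ha
  set b : ℝ := φ 1 with hb
  have ha0 : a ≤ 0 := by have := hnonneg (-1); simp [ha]; linarith
  have hb0 : 0 ≤ b := hnonneg 1
  have h0 : φ 0 = 0 := by
    have h := hhom 0 2 (by norm_num)
    rw [show (2:ℝ) * 0 = 0 by ring] at h
    linarith
  have hpos : ∀ t : ℝ, 0 < t → φ t = b * t := by
    intro t ht
    have h := hhom 1 t ht
    rw [show t * 1 = t by ring] at h
    rw [h, hb]; ring
  have hneg : ∀ t : ℝ, t < 0 → φ t = a * t := by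
    intro t ht
    have h := hhom (-1) (-t) (by linarith)
    rw [show (-t) * (-1) = t by ring] at h
    rw [h, ha]; ring
  -- key bound: s ∈ [a,b] implies s*t ≤ φ t
  have hbound : ∀ s : ℝ, a ≤ s → s ≤ b → ∀ t : ℝ, s * t ≤ φ t := by
    intro s hs1 hs2 t
    rcases lt_trichotomy t 0 with ht | ht | ht
    · rw [hneg t ht]; nlinarith
    · rw [ht, h0]; simp
    · rw [hpos t ht]; nlinarith
  -- conjugate is 0 on [a,b]
  have hC0 : ∀ s : ℝ, a ≤ s → s ≤ b →
      (⨆ t : ℝ, ((s * t - φ t : ℝ) : EReal)) = 0 := by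
    intro s hs1 hs2
    apply le_antisymm
    · apply iSup_le
      intro t
      have h1 : s * t - φ t ≤ 0 := by have := hbound s hs1 hs2 t; linarith
      exact_mod_cast h1
    · have h2 := le_iSup (fun t : ℝ => ((s * t - φ t : ℝ) : EReal)) 0
      simpa [h0] using h2
  -- conjugate is ⊤ outside [a,b]
  have hCtop : ∀ s : ℝ, b < s ∨ s < a →
      (⨆ t : ℝ, ((s * t - φ t : ℝ) : EReal)) = ⊤ := by
    intro s hs
    rw [iSup_eq_top]
    intro y hy
    obtain ⟨M, hM1, hM2⟩ := EReal.exists_between_coe_real hy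
    rcases hs with hs | hs
    · refine ⟨max 1 ((M + 1) / (s - b)), ?_⟩
      have htpos : (0:ℝ) < max 1 ((M + 1) / (s - b)) := lt_of_lt_of_le one_pos (le_max_left _ _)
      have hsb : (0:ℝ) < s - b := by linarith
      have h3 : (M + 1) / (s - b) ≤ max 1 ((M + 1) / (s - b)) := le_max_right _ _
      have h4 : M + 1 ≤ (s - b) * max 1 ((M + 1) / (s - b)) := by
        rw [div_le_iff₀ hsb] at h3; linarith [h3]
      have h5 : M < s * max 1 ((M + 1) / (s - b)) - φ (max 1 ((M + 1) / (s - b))) := by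
        rw [hpos _ htpos]; nlinarith
      calc y < (M : EReal) := hM1
        _ < _ := by exact_mod_cast h5
    · refine ⟨min (-1) ((M + 1) / (s - a)), ?_⟩
      have htneg : min (-1) ((M + 1) / (s - a)) < (0:ℝ) :=
        lt_of_le_of_lt (min_le_left _ _) (by norm_num)
      have hsa : s - a < (0:ℝ) := by linarith
      have h3 : min (-1) ((M + 1) / (s - a)) ≤ (M + 1) / (s - a) := min_le_right _ _
      have h4 : M + 1 ≤ (s - a) * min (-1) ((M + 1) / (s - a)) := by
        rw [le_div_iff_of_neg hsa] at h3; linarith [h3]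
      have h5 : M < s * min (-1) ((M + 1) / (s - a)) - φ (min (-1) ((M + 1) / (s - a))) := by
        rw [hneg _ htneg]; nlinarith
      calc y < (M : EReal) := hM1
        _ < _ := by exact_mod_cast h5
  -- now the biconjugate
  apply le_antisymm
  · apply iSup_le
    intro s
    by_cases hs : a ≤ s ∧ s ≤ b
    · rw [hC0 s hs.1 hs.2, sub_zero]
      have h6 : x * s ≤ φ x := by
        have := hbound s hs.1 hs.2 x; linarith
      exact_mod_cast h6
    · have hs' : b < s ∨ s < a := by
        rcases not_and_or.mp hs with h | h
        · right; linarith [not_le.mp h]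
        · left; exact not_le.mp h
      rw [hCtop s hs']
      simp
  · rcases le_or_gt 0 x with hx | hx
    · refine le_trans ?_ (le_iSup _ b)
      rw [hC0 b (ha0.trans hb0) (le_refl b), sub_zero]
      have h7 : φ x = x * b := by
        rcases eq_or_lt_of_le hx with hx' | hx'
        · rw [← hx', h0]; ring
        · rw [hpos x hx']; ring
      exact_mod_cast h7.le
    · refine le_trans ?_ (le_iSup _ a)
      rw [hC0 a (le_refl a) (ha0.trans hb0), sub_zero]
      have h7 : φ x = x * a := by rw [hneg x hx]; ring
      exact_mod_cast h7.le
end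

section
/- Define the primal objective P_C(w) = (1/2)‖w‖² + C ∑_{i=1}^l max(α(⟨w, z_i⟩ + ȳ_i), β(⟨w, z_i⟩ + ȳ_i)) for w ∈ ℝ^n, and the dual objective D_C(θ) = −(C²/2)‖∑_{i=1}^l θ_i z_i‖² + C ∑_{i=1}^l ȳ_i θ_i for θ ∈ ℝ^l. Then for every C > 0, strong duality holds: inf_{w ∈ ℝ^n} P_C(w) = sup_{θ ∈ B} D_C(θ), and both the infimum and the supremum are attained. -/
open scoped RealInnerProductSpace

lemma kkt_aux (a b th t N : ℝ) (hab : a < b) (h1 : a ≤ th) (h2 : th ≤ b) (hN : 0 ≤ N)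
    (h : ∀ s, a ≤ s → s ≤ b → (s - th) * t ≤ (s - th)^2 * N) :
    th * t = max (a * t) (b * t) := by
  rcases lt_trichotomy t 0 with ht | ht | ht
  · have hth : th = a := by
      by_contra hne
      have hlt : a < th := lt_of_le_of_ne h1 (Ne.symm hne)
      set ε := min (th - a) ((-t)/(N+1)) with hε
      have hε0 : 0 < ε := lt_min (by linarith) (div_pos (by linarith) (by linarith))
      have hεa : ε ≤ th - a := min_le_left _ _
      have hεt : ε ≤ (-t)/(N+1) := min_le_right _ _
      have hεmul : ε * (N+1) ≤ -t := by
        rw [← le_div_iff₀ (by positivity)]; exact hεt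
      have hs := h (th - ε) (by linarith) (by linarith)
      nlinarith [mul_pos hε0 hε0, sq_nonneg ε]
    subst hth
    rw [max_eq_left (by nlinarith)]
  · simp [ht]
  · have hth : th = b := by
      by_contra hne
      have hlt : th < b := lt_of_le_of_ne h2 hne
      set ε := min (b - th) (t/(N+1)) with hε
      have hε0 : 0 < ε := lt_min (by linarith) (by positivity)
      have hεa : ε ≤ b - th := min_le_left _ _
      have hεt : ε ≤ t/(N+1) := min_le_right _ _
      have hεmul : ε * (N+1) ≤ t := by
        rw [← le_div_iff₀ (by positivity)]; exact hεt
      have hs := h (th + ε) (by linarith) (by linarith)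
      nlinarith [mul_pos hε0 hε0]
    subst hth
    rw [max_eq_right (by nlinarith)]

/-- Strong duality between the primal objective
`P_C(w) = (1/2)‖w‖² + C ∑ᵢ max(α(⟨w,zᵢ⟩+ȳᵢ), β(⟨w,zᵢ⟩+ȳᵢ))` and the dual objective
`D_C(θ) = -(C²/2)‖∑ᵢ θᵢ zᵢ‖² + C ∑ᵢ ȳᵢ θᵢ` over the box `B = [α,β]^l`:
both the infimum of `P_C` and the supremum of `D_C` over `B` are attained, and they
coincide. -/
theorem svm_strong_duality (n l : ℕ) (hn : 1 ≤ n) (hl : 1 ≤ l)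
    (z : Fin l → EuclideanSpace ℝ (Fin n)) (ybar : Fin l → ℝ)
    (α β : ℝ) (hαβ : α < β) (C : ℝ) (hC : 0 < C) :
    ∃ w : EuclideanSpace ℝ (Fin n), ∃ θ : Fin l → ℝ,
      (∀ i, α ≤ θ i ∧ θ i ≤ β) ∧
      (∀ w' : EuclideanSpace ℝ (Fin n),
        (1/2) * ‖w‖^2 + C * ∑ i, max (α * (⟪w, z i⟫ + ybar i)) (β * (⟪w, z i⟫ + ybar i))
          ≤ (1/2) * ‖w'‖^2
            + C * ∑ i, max (α * (⟪w', z i⟫ + ybar i)) (β * (⟪w', z i⟫ + ybar i))) ∧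
      (∀ θ' : Fin l → ℝ, (∀ i, α ≤ θ' i ∧ θ' i ≤ β) →
        -(C^2/2) * ‖∑ i, θ' i • z i‖^2 + C * ∑ i, ybar i * θ' i
          ≤ -(C^2/2) * ‖∑ i, θ i • z i‖^2 + C * ∑ i, ybar i * θ i) ∧
      ((1/2) * ‖w‖^2 + C * ∑ i, max (α * (⟪w, z i⟫ + ybar i)) (β * (⟪w, z i⟫ + ybar i))
        = -(C^2/2) * ‖∑ i, θ i • z i‖^2 + C * ∑ i, ybar i * θ i) := by
  classical
  set g : (Fin l → ℝ) → ℝ :=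
    fun θ => -(C^2/2) * ‖∑ i, θ i • z i‖^2 + C * ∑ i, ybar i * θ i with hg
  have hgc : Continuous g := by
    apply Continuous.add
    · exact (continuous_const.mul (((continuous_finset_sum _ fun i _ =>
        (continuous_apply i).smul continuous_const).norm).pow 2))
    · exact continuous_const.mul (continuous_finset_sum _ fun i _ =>
        continuous_const.mul (continuous_apply i))
  have hScpt : IsCompact (Set.univ.pi fun _ : Fin l => Set.Icc α β) :=
    isCompact_univ_pi fun _ => isCompact_Icc
  have hSne : (Set.univ.pi fun _ : Fin l => Set.Icc α β).Nonempty :=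
    ⟨fun _ => α, by intro i _; exact ⟨le_refl _, le_of_lt hαβ⟩⟩
  obtain ⟨θ, hθS, hmax⟩ := hScpt.exists_isMaxOn hSne hgc.continuousOn
  have hθbox : ∀ i, α ≤ θ i ∧ θ i ≤ β := fun i => hθS i (Set.mem_univ i)
  set v : EuclideanSpace ℝ (Fin n) := ∑ i, θ i • z i with hv
  set w : EuclideanSpace ℝ (Fin n) := (-C) • v with hw
  have hwz : ∀ i, ⟪w, z i⟫ = -C * ⟪v, z i⟫ := fun i => by
    rw [hw, real_inner_smul_left]
  set t : Fin l → ℝ := fun i => ⟪w, z i⟫ + ybar i with htdef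
  -- increment inequality from maximality
  have hincr : ∀ (i : Fin l) (s : ℝ), α ≤ s → s ≤ β →
      (s - θ i) * t i ≤ (s - θ i)^2 * (C/2 * ‖z i‖^2) := by
    intro i s hs1 hs2
    have hmem : Function.update θ i s ∈ Set.univ.pi fun _ : Fin l => Set.Icc α β := by
      intro j _
      by_cases hj : j = i
      · subst hj; simp [Function.update_self]; exact ⟨hs1, hs2⟩
      · rw [Function.update_of_ne hj]; exact hθS j (Set.mem_univ j)
    have hle : g (Function.update θ i s) ≤ g θ := hmax hmem
    have hsum1 : (∑ j, Function.update θ i s j • z j) = v + (s - θ i) • z i := by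
      have h1 : ∑ j, (Function.update θ i s j • z j - θ j • z j) = (s - θ i) • z i := by
        rw [Finset.sum_eq_single i]
        · rw [Function.update_self, ← sub_smul]
        · intro j _ hj; rw [Function.update_of_ne hj, sub_self]
        · intro h; exact absurd (Finset.mem_univ i) h
      rw [Finset.sum_sub_distrib] at h1
      rw [hv]; linear_combination (norm := module) h1
    have hsum2 : (∑ j, ybar j * Function.update θ i s j)
        = (∑ j, ybar j * θ j) + ybar i * (s - θ i) := by
      have h1 : ∑ j, (ybar j * Function.update θ i s j - ybar j * θ j) = ybar i * (s - θ i) := by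
        rw [Finset.sum_eq_single i]
        · rw [Function.update_self]; ring
        · intro j _ hj; rw [Function.update_of_ne hj, sub_self]
        · intro h; exact absurd (Finset.mem_univ i) h
      rw [Finset.sum_sub_distrib] at h1
      linarith
    have hnorm : ‖v + (s - θ i) • z i‖^2
        = ‖v‖^2 + 2 * ((s - θ i) * ⟪v, z i⟫) + (s - θ i)^2 * ‖z i‖^2 := by
      rw [norm_add_sq_real, real_inner_smul_right, norm_smul, mul_pow, Real.norm_eq_abs, sq_abs]
    simp only [hg, hsum1, hsum2, hnorm] at hle
    have hti : t i = -C * ⟪v, z i⟫ + ybar i := by rw [htdef]; simp [hwz i]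
    have hC' := hC
    rw [hti]
    nlinarith [hle]
  -- KKT: θ i * t i = max (α * t i) (β * t i)
  have hkkt : ∀ i, θ i * t i = max (α * (t i)) (β * (t i)) := by
    intro i
    exact kkt_aux α β (θ i) (t i) (C/2 * ‖z i‖^2) hαβ (hθbox i).1 (hθbox i).2
      (by positivity) (hincr i)
  have hinner_sum : ∀ w' : EuclideanSpace ℝ (Fin n),
      ⟪w', v⟫ = ∑ i, θ i * ⟪w', z i⟫ := by
    intro w'
    rw [hv, inner_sum]
    exact Finset.sum_congr rfl fun i _ => real_inner_smul_right _ _ _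
  have hnw : ‖w‖^2 = C^2 * ‖v‖^2 := by
    rw [hw, norm_smul, mul_pow, Real.norm_eq_abs, sq_abs]; ring
  have hwv : ⟪w, v⟫ = -C * ‖v‖^2 := by
    rw [hw, real_inner_smul_left, real_inner_self_eq_norm_sq]
  have hybar : ∑ i, θ i * ybar i = ∑ i, ybar i * θ i :=
    Finset.sum_congr rfl fun i _ => mul_comm _ _
  -- equality at (w, θ)
  have hsum_eq : ∑ i, max (α * (⟪w, z i⟫ + ybar i)) (β * (⟪w, z i⟫ + ybar i))
      = ∑ i, θ i * t i := by
    exact Finset.sum_congr rfl fun i _ => (hkkt i).symm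
  have hsum_t : ∀ w' : EuclideanSpace ℝ (Fin n),
      ∑ i, θ i * (⟪w', z i⟫ + ybar i) = ⟪w', v⟫ + ∑ i, θ i * ybar i := by
    intro w'
    rw [hinner_sum w', ← Finset.sum_add_distrib]
    exact Finset.sum_congr rfl fun i _ => by ring
  have heq : (1/2) * ‖w‖^2 + C * ∑ i, max (α * (⟪w, z i⟫ + ybar i)) (β * (⟪w, z i⟫ + ybar i))
      = -(C^2/2) * ‖v‖^2 + C * ∑ i, ybar i * θ i := by
    rw [hsum_eq]
    have := hsum_t w
    simp only [htdef] at this ⊢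
    rw [this, hwv, hnw, hybar]
    ring
  refine ⟨w, θ, hθbox, ?_, ?_, ?_⟩
  · -- primal optimality
    intro w'
    rw [heq]
    have h1 : ∀ i, θ i * (⟪w', z i⟫ + ybar i)
        ≤ max (α * (⟪w', z i⟫ + ybar i)) (β * (⟪w', z i⟫ + ybar i)) := by
      intro i
      rcases le_or_gt 0 (⟪w', z i⟫ + ybar i) with h | h
      · exact le_max_of_le_right (mul_le_mul_of_nonneg_right (hθbox i).2 h)
      · exact le_max_of_le_left (mul_le_mul_of_nonpos_right (hθbox i).1 h.le)
    have h2 : ∑ i, θ i * (⟪w', z i⟫ + ybar i)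
        ≤ ∑ i, max (α * (⟪w', z i⟫ + ybar i)) (β * (⟪w', z i⟫ + ybar i)) :=
      Finset.sum_le_sum fun i _ => h1 i
    have h3 := hsum_t w'
    have h0 : (0:ℝ) ≤ ‖w' + C • v‖^2 := sq_nonneg _
    rw [norm_add_sq_real, real_inner_smul_right, norm_smul, mul_pow, Real.norm_eq_abs,
      sq_abs] at h0
    nlinarith [h2, h3, hybar]
  · -- dual optimality
    intro θ' hθ'
    exact hmax (fun i _ => ⟨(hθ' i).1, (hθ' i).2⟩)
  · exact heq
end

section
/- Let C > 0 and let θ* ∈ B minimize the dual objective g_C over B. Define w* = −C ∑_{i=1}^l θ*_i z_i. Then w* minimizes the primal objective P_C(w) = (1/2)‖w‖² + C ∑_{i=1}^l max(α(⟨w, z_i⟩ + ȳ_i), β(⟨w, z_i⟩ + ȳ_i)) over all w ∈ ℝ^n. -/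
open scoped RealInnerProductSpace

set_option maxHeartbeats 800000

/-- If `θ*` minimizes the dual objective
`g_C(θ) = (C/2)‖∑ᵢ θᵢ zᵢ‖² - ∑ᵢ ȳᵢ θᵢ` over the box `B = [α,β]^l`, then
`w* = -C ∑ᵢ θ*ᵢ zᵢ` minimizes the primal objective
`P_C(w) = (1/2)‖w‖² + C ∑ᵢ max(α(⟨w,zᵢ⟩+ȳᵢ), β(⟨w,zᵢ⟩+ȳᵢ))` over `ℝⁿ`. -/
theorem primal_optimal_from_dual_optimal (n l : ℕ) (hn : 1 ≤ n) (hl : 1 ≤ l)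
    (z : Fin l → EuclideanSpace ℝ (Fin n)) (ybar : Fin l → ℝ)
    (α β : ℝ) (hαβ : α < β) (C : ℝ) (hC : 0 < C)
    (θ : Fin l → ℝ) (hθB : ∀ i, α ≤ θ i ∧ θ i ≤ β)
    (hθmin : ∀ θ' : Fin l → ℝ, (∀ i, α ≤ θ' i ∧ θ' i ≤ β) →
      (C/2) * ‖∑ i, θ i • z i‖^2 - ∑ i, ybar i * θ i
        ≤ (C/2) * ‖∑ i, θ' i • z i‖^2 - ∑ i, ybar i * θ' i)
    (wstar : EuclideanSpace ℝ (Fin n))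
    (hwstar : wstar = -(C • ∑ i, θ i • z i)) :
    ∀ w : EuclideanSpace ℝ (Fin n),
      (1/2) * ‖wstar‖^2
          + C * ∑ i, max (α * (⟪wstar, z i⟫ + ybar i)) (β * (⟪wstar, z i⟫ + ybar i))
        ≤ (1/2) * ‖w‖^2
          + C * ∑ i, max (α * (⟪w, z i⟫ + ybar i)) (β * (⟪w, z i⟫ + ybar i)) := by
  intro w
  set u : EuclideanSpace ℝ (Fin n) := ∑ i, θ i • z i with hu
  -- perturbation inequality from dual optimality
  have key : ∀ i : Fin l, ∀ s : ℝ, α ≤ θ i + s → θ i + s ≤ β →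
      0 ≤ s * (C * ⟪u, z i⟫ - ybar i) + (C/2) * s^2 * ‖z i‖^2 := by
    intro i s h1 h2
    set θ' : Fin l → ℝ := Function.update θ i (θ i + s) with hθ'
    have hfeas : ∀ j, α ≤ θ' j ∧ θ' j ≤ β := by
      intro j
      rcases eq_or_ne j i with rfl | hj
      · simp [hθ', h1, h2]
      · simp [hθ', Function.update_of_ne hj, hθB j]
    have h := hθmin θ' hfeas
    have hsum : ∑ j, θ' j • z j = u + s • z i := by
      have : ∀ j ∈ Finset.univ, θ' j • z j
          = θ j • z j + (if j = i then s • z j else 0) := by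
        intro j _
        rcases eq_or_ne j i with rfl | hj
        · simp [hθ', add_smul]
        · simp [hθ', Function.update_of_ne hj, hj]
      rw [Finset.sum_congr rfl this, Finset.sum_add_distrib, Finset.sum_ite_eq' Finset.univ i]
      simp [hu]
    have hysum : ∑ j, ybar j * θ' j = (∑ j, ybar j * θ j) + ybar i * s := by
      have : ∀ j ∈ Finset.univ, ybar j * θ' j
          = ybar j * θ j + (if j = i then ybar j * s else 0) := by
        intro j _
        rcases eq_or_ne j i with rfl | hj
        · simp [hθ']; ring
        · simp [hθ', Function.update_of_ne hj, hj]
      rw [Finset.sum_congr rfl this, Finset.sum_add_distrib, Finset.sum_ite_eq' Finset.univ i]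
      simp
    have hnorm : ‖u + s • z i‖^2 = ‖u‖^2 + 2 * (s * ⟪u, z i⟫) + s^2 * ‖z i‖^2 := by
      rw [@norm_add_sq_real, real_inner_smul_right, norm_smul, mul_pow]
      simp only [Real.norm_eq_abs, sq_abs]
    rw [hsum, hysum, hnorm] at h
    nlinarith [h]
  -- complementarity: for t i = ⟪wstar, z i⟫ + ybar i, max(α t, β t) = θ i * t
  have hwz : ∀ i, ⟪wstar, z i⟫ = -(C * ⟪u, z i⟫) := by
    intro i
    rw [hwstar, inner_neg_left, real_inner_smul_left]
  have comp : ∀ i : Fin l,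
      max (α * (⟪wstar, z i⟫ + ybar i)) (β * (⟪wstar, z i⟫ + ybar i))
        = θ i * (⟪wstar, z i⟫ + ybar i) := by
    intro i
    set d : ℝ := C * ⟪u, z i⟫ - ybar i with hd
    have ht : ⟪wstar, z i⟫ + ybar i = -d := by rw [hwz i, hd]; ring
    rw [ht]
    rcases lt_trichotomy d 0 with hdlt | hdeq | hdgt
    · -- d < 0 : θ i = β
      have hθβ : θ i = β := by
        by_contra hne
        have hβ : θ i < β := lt_of_le_of_ne (hθB i).2 hne
        set ε : ℝ := min (β - θ i) (-d / (C * ‖z i‖^2 + 1)) with hε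
        have hden : 0 < C * ‖z i‖^2 + 1 := by positivity
        have hεpos : 0 < ε := by
          apply lt_min (by linarith)
          exact div_pos (by linarith) hden
        have hε1 : ε ≤ β - θ i := min_le_left _ _
        have hε2 : ε ≤ -d / (C * ‖z i‖^2 + 1) := min_le_right _ _
        have hε2' : ε * (C * ‖z i‖^2 + 1) ≤ -d := by
          rw [← le_div_iff₀ hden]; exact hε2
        have hk := key i ε (by linarith [(hθB i).1]) (by linarith)
        nlinarith [sq_nonneg (‖z i‖), hεpos, hk, hε2']
      rw [hθβ]
      exact max_eq_right (by nlinarith)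
    · simp [hdeq]
    · -- d > 0 : θ i = α
      have hθα : θ i = α := by
        by_contra hne
        have hα : α < θ i := lt_of_le_of_ne (hθB i).1 (Ne.symm hne)
        set ε : ℝ := min (θ i - α) (d / (C * ‖z i‖^2 + 1)) with hε
        have hden : 0 < C * ‖z i‖^2 + 1 := by positivity
        have hεpos : 0 < ε := by
          apply lt_min (by linarith)
          exact div_pos hdgt hden
        have hε1 : ε ≤ θ i - α := min_le_left _ _
        have hε2' : ε * (C * ‖z i‖^2 + 1) ≤ d := by
          rw [← le_div_iff₀ hden]; exact min_le_right _ _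
        have hk := key i (-ε) (by linarith) (by linarith [(hθB i).2])
        nlinarith [sq_nonneg (‖z i‖), hεpos, hk, hε2']
      rw [hθα]
      exact max_eq_left (by nlinarith)
  -- θ i * t ≤ max(α t, β t) for any w
  have bound : ∀ i : Fin l,
      θ i * (⟪w, z i⟫ + ybar i)
        ≤ max (α * (⟪w, z i⟫ + ybar i)) (β * (⟪w, z i⟫ + ybar i)) := by
    intro i
    set t := ⟪w, z i⟫ + ybar i
    rcases le_or_gt 0 t with h0 | h0
    · exact le_trans (mul_le_mul_of_nonneg_right (hθB i).2 h0) (le_max_right _ _)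
    · exact le_trans (by nlinarith [(hθB i).1]) (le_max_left (α * t) (β * t))
  -- linearize the sums
  have expand : ∀ v : EuclideanSpace ℝ (Fin n),
      ∑ i, θ i * (⟪v, z i⟫ + ybar i) = ⟪v, u⟫ + ∑ i, θ i * ybar i := by
    intro v
    have : ⟪v, u⟫ = ∑ i, θ i * ⟪v, z i⟫ := by
      rw [hu, inner_sum]
      exact Finset.sum_congr rfl fun i _ => real_inner_smul_right v (z i) (θ i)
    rw [this, ← Finset.sum_add_distrib]
    exact Finset.sum_congr rfl fun i _ => by ring
  -- norms
  have hw2 : ‖wstar‖^2 = C^2 * ‖u‖^2 := by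
    rw [hwstar, norm_neg, norm_smul, mul_pow]
    simp only [Real.norm_eq_abs, sq_abs]
  have hwu : ⟪wstar, u⟫ = -(C * ‖u‖^2) := by
    rw [hwstar, inner_neg_left, real_inner_smul_left, real_inner_self_eq_norm_sq]
  -- left side value
  have hL : ∑ i, max (α * (⟪wstar, z i⟫ + ybar i)) (β * (⟪wstar, z i⟫ + ybar i))
      = -(C * ‖u‖^2) + ∑ i, θ i * ybar i := by
    rw [Finset.sum_congr rfl fun i _ => comp i, expand wstar, hwu]
  -- right side lower bound
  have hR : ⟪w, u⟫ + ∑ i, θ i * ybar i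
      ≤ ∑ i, max (α * (⟪w, z i⟫ + ybar i)) (β * (⟪w, z i⟫ + ybar i)) := by
    rw [← expand w]
    exact Finset.sum_le_sum fun i _ => bound i
  have hsq : 0 ≤ ‖w‖^2 + 2 * (C * ⟪w, u⟫) + C^2 * ‖u‖^2 := by
    have := sq_nonneg ‖w + C • u‖
    rw [@norm_add_sq_real, real_inner_smul_right, norm_smul, mul_pow] at this
    simp only [Real.norm_eq_abs, sq_abs] at this
    linarith
  have hCR := mul_le_mul_of_nonneg_left hR (le_of_lt hC)
  rw [mul_add] at hCR
  rw [hL, hw2, mul_add]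
  nlinarith [hsq, hCR]
end

section
/- Let C > 0 and let θ* ∈ B minimize the dual objective g_C over B. If for some index i one has C·⟨∑_{j=1}^l θ*_j z_j, z_i⟩ > ȳ_i, then θ*_i = α. -/
open scoped RealInnerProductSpace

set_option maxHeartbeats 1000000

/-- If `θ*` minimizes the dual objective
`g_C(θ) = (C/2)‖∑ᵢ θᵢ zᵢ‖² - ∑ᵢ ȳᵢ θᵢ` over the box `B = [α,β]^l` and
`C⟨∑ⱼ θ*ⱼ zⱼ, zᵢ⟩ > ȳᵢ` for some index `i`, then `θ*ᵢ = α`. -/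
theorem dual_kkt_lower (n l : ℕ) (hn : 1 ≤ n) (hl : 1 ≤ l)
    (z : Fin l → EuclideanSpace ℝ (Fin n)) (ybar : Fin l → ℝ)
    (α β : ℝ) (hαβ : α < β) (C : ℝ) (hC : 0 < C)
    (θ : Fin l → ℝ) (hθB : ∀ i, α ≤ θ i ∧ θ i ≤ β)
    (hθmin : ∀ θ' : Fin l → ℝ, (∀ i, α ≤ θ' i ∧ θ' i ≤ β) →
      (C/2) * ‖∑ i, θ i • z i‖^2 - ∑ i, ybar i * θ i
        ≤ (C/2) * ‖∑ i, θ' i • z i‖^2 - ∑ i, ybar i * θ' i)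
    (i : Fin l)
    (hi : C * ⟪∑ j, θ j • z j, z i⟫ > ybar i) :
    θ i = α := by
  by_contra hne
  have hgt : α < θ i := lt_of_le_of_ne (hθB i).1 (Ne.symm hne)
  set S := ∑ j, θ j • z j with hS
  set D := C * ⟪S, z i⟫ - ybar i with hD
  have hDpos : 0 < D := by simp only [hD]; linarith
  set E := ‖z i‖^2 with hE
  have hEnn : 0 ≤ E := by positivity
  have hden : 0 < C * E + 1 := by positivity
  set t := min (θ i - α) (D / (C * E + 1)) with ht
  have htpos : 0 < t := lt_min (by linarith) (div_pos hDpos hden)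
  have ht1 : t ≤ θ i - α := min_le_left _ _
  have ht2 : t ≤ D / (C * E + 1) := min_le_right _ _
  set θ' := Function.update θ i (θ i - t) with hθ'
  have hbox : ∀ j, α ≤ θ' j ∧ θ' j ≤ β := by
    intro j
    by_cases hj : j = i
    · subst hj
      simp only [hθ', Function.update_self]
      exact ⟨by linarith, by linarith [(hθB j).2]⟩
    · simp only [hθ', Function.update_of_ne hj]
      exact hθB j
  have hsum : ∑ j, θ' j • z j = S - t • z i := by
    have : ∀ j ∈ Finset.univ, θ' j • z j
        = θ j • z j + (if j = i then (-t) • z i else 0) := by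
      intro j _
      by_cases hj : j = i
      · subst hj
        simp only [hθ', Function.update_self, if_pos rfl, sub_smul, neg_smul]
        abel
      · simp [hθ', Function.update_of_ne hj, hj]
    rw [Finset.sum_congr rfl this, Finset.sum_add_distrib,
      Finset.sum_ite_eq' Finset.univ i (fun _ => (-t) • z i)]
    simp [hS, sub_eq_add_neg]
  have hlin : ∑ j, ybar j * θ' j = (∑ j, ybar j * θ j) - t * ybar i := by
    have : ∀ j ∈ Finset.univ, ybar j * θ' j
        = ybar j * θ j + (if j = i then -(t * ybar i) else 0) := by
      intro j _
      by_cases hj : j = i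
      · subst hj
        simp [hθ']; ring
      · simp [hθ', Function.update_of_ne hj, hj]
    rw [Finset.sum_congr rfl this, Finset.sum_add_distrib,
      Finset.sum_ite_eq' Finset.univ i (fun _ => -(t * ybar i))]
    simp [sub_eq_add_neg]
  have hnorm : ‖S - t • z i‖^2 = ‖S‖^2 - 2 * (t * ⟪S, z i⟫) + t^2 * E := by
    rw [norm_sub_sq_real, real_inner_smul_right, norm_smul]
    simp only [hE, mul_pow, Real.norm_eq_abs, sq_abs]
  have hmin := hθmin θ' hbox
  rw [hsum, hlin, hnorm] at hmin
  clear_value S D E t θ'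
  have key : t * D ≤ (C/2) * t^2 * E := by
    simp only [hD]; nlinarith [hmin]
  have htle : (C/2) * t * E < D := by
    have h1 : (C/2) * t * E ≤ (C/2) * (D / (C * E + 1)) * E := by
      apply mul_le_mul_of_nonneg_right _ hEnn
      apply mul_le_mul_of_nonneg_left ht2 (by linarith)
    have h2 : (C/2) * (D / (C * E + 1)) * E < D := by
      have heq : (C/2) * (D / (C * E + 1)) * E = (C * D * E / 2) / (C * E + 1) := by
        ring
      rw [heq, div_lt_iff₀ hden]
      have h3 : 0 ≤ C * D * E := by positivity
      nlinarith [h3]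
    linarith
  have h4 : (C/2) * t^2 * E < t * D := by
    calc (C/2) * t^2 * E = t * ((C/2) * t * E) := by ring
      _ < t * D := mul_lt_mul_of_pos_left htle htpos
  linarith
end

section
/- Let C > 0 and let θ* ∈ B minimize the dual objective g_C over B. If for some index i one has C·⟨∑_{j=1}^l θ*_j z_j, z_i⟩ < ȳ_i, then θ*_i = β. -/
open scoped RealInnerProductSpace

/-- If `θ*` minimizes the dual objective
`g_C(θ) = (C/2)‖∑ᵢ θᵢ zᵢ‖² - ∑ᵢ ȳᵢ θᵢ` over the box `B = [α,β]^l` and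
`C⟨∑ⱼ θ*ⱼ zⱼ, zᵢ⟩ < ȳᵢ` for some index `i`, then `θ*ᵢ = β`. -/
theorem dual_kkt_upper (n l : ℕ) (hn : 1 ≤ n) (hl : 1 ≤ l)
    (z : Fin l → EuclideanSpace ℝ (Fin n)) (ybar : Fin l → ℝ)
    (α β : ℝ) (hαβ : α < β) (C : ℝ) (hC : 0 < C)
    (θ : Fin l → ℝ) (hθB : ∀ i, α ≤ θ i ∧ θ i ≤ β)
    (hθmin : ∀ θ' : Fin l → ℝ, (∀ i, α ≤ θ' i ∧ θ' i ≤ β) →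
      (C/2) * ‖∑ i, θ i • z i‖^2 - ∑ i, ybar i * θ i
        ≤ (C/2) * ‖∑ i, θ' i • z i‖^2 - ∑ i, ybar i * θ' i)
    (i : Fin l)
    (hi : C * ⟪∑ j, θ j • z j, z i⟫ < ybar i) :
    θ i = β := by
  by_contra hne
  have hlt : θ i < β := lt_of_le_of_ne (hθB i).2 hne
  set u := ∑ j, θ j • z j with hu
  set δ := ybar i - C * ⟪u, z i⟫ with hδ
  have hδpos : 0 < δ := by simp only [hδ]; linarith
  set t := min (β - θ i) (δ / (C * ‖z i‖^2 + 1)) with ht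
  have hden : 0 < C * ‖z i‖^2 + 1 := by positivity
  have htpos : 0 < t := lt_min (by linarith) (div_pos hδpos hden)
  have htle : t ≤ β - θ i := min_le_left _ _
  have htle2 : t ≤ δ / (C * ‖z i‖^2 + 1) := min_le_right _ _
  set θ' := Function.update θ i (θ i + t) with hθ'
  have hfeas : ∀ j, α ≤ θ' j ∧ θ' j ≤ β := by
    intro j
    by_cases h : j = i
    · subst h
      simp only [hθ', Function.update_self]
      exact ⟨by linarith [(hθB j).1], by linarith⟩
    · simp only [hθ', Function.update_of_ne h]; exact hθB j
  have hsum : ∑ j, θ' j • z j = u + t • z i := by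
    have h1 : ∀ j ∈ Finset.univ, θ' j • z j
        = θ j • z j + (if j = i then t • z i else 0) := by
      intro j _
      by_cases h : j = i
      · subst h; simp [hθ', Function.update_self, add_smul]
      · simp [hθ', Function.update_of_ne h, h]
    rw [Finset.sum_congr rfl h1, Finset.sum_add_distrib, Finset.sum_ite_eq' Finset.univ i]
    simp [hu]
  have hlin : ∑ j, ybar j * θ' j = (∑ j, ybar j * θ j) + ybar i * t := by
    have h1 : ∀ j ∈ Finset.univ, ybar j * θ' j
        = ybar j * θ j + (if j = i then ybar i * t else 0) := by
      intro j _
      by_cases h : j = i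
      · subst h; simp [hθ', Function.update_self]; ring
      · simp [hθ', Function.update_of_ne h, h]
    rw [Finset.sum_congr rfl h1, Finset.sum_add_distrib, Finset.sum_ite_eq' Finset.univ i]
    simp
  have hnorm : ‖u + t • z i‖^2 = ‖u‖^2 + 2 * t * ⟪u, z i⟫ + t^2 * ‖z i‖^2 := by
    rw [norm_add_sq_real, real_inner_smul_right, norm_smul]
    rw [Real.norm_eq_abs, abs_of_pos htpos]
    ring
  have hmin := hθmin θ' hfeas
  rw [hsum, hlin, hnorm] at hmin
  have hkey : 0 ≤ t * (C * ⟪u, z i⟫ + (C/2) * t * ‖z i‖^2 - ybar i) := by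
    nlinarith [hmin]
  have ht2 : t * (C * ‖z i‖^2 + 1) ≤ δ := (le_div_iff₀ hden).mp htle2
  nlinarith [hkey, ht2, mul_pos htpos htpos, mul_pos htpos hδpos]
end

section
/- Let C > 0, let θ* ∈ B minimize the dual objective g_C over B, and let S ⊆ {1, …, l} be any index set with complement S^c. Define ŷ_i = ȳ_i − C·⟨z_i, ∑_{j ∈ S} θ*_j z_j⟩ for i ∈ S^c, and the reduced objective ĝ(η) = (C/2)‖∑_{i ∈ S^c} η_i z_i‖² − ∑_{i ∈ S^c} ŷ_i η_i for η ∈ ℝ^{S^c}. Then the restriction of θ* to S^c minimizes ĝ over the box {η : α ≤ η_i ≤ β for all i ∈ S^c}. -/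
open scoped RealInnerProductSpace

/-- If `θ*` minimizes the dual objective
`g_C(θ) = (C/2)‖∑ᵢ θᵢ zᵢ‖² - ∑ᵢ ȳᵢ θᵢ` over the box `B = [α,β]^l`, and `S` is any
index set with complement `Sᶜ`, then with `ŷᵢ = ȳᵢ - C⟨zᵢ, ∑_{j ∈ S} θ*ⱼ zⱼ⟩`, the
restriction of `θ*` to `Sᶜ` minimizes the reduced objective
`ĝ(η) = (C/2)‖∑_{i ∈ Sᶜ} ηᵢ zᵢ‖² - ∑_{i ∈ Sᶜ} ŷᵢ ηᵢ` over the box `[α,β]^{Sᶜ}`. -/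
theorem dual_reduced_problem (n l : ℕ) (hn : 1 ≤ n) (hl : 1 ≤ l)
    (z : Fin l → EuclideanSpace ℝ (Fin n)) (ybar : Fin l → ℝ)
    (α β : ℝ) (hαβ : α < β) (C : ℝ) (hC : 0 < C)
    (θ : Fin l → ℝ) (hθB : ∀ i, α ≤ θ i ∧ θ i ≤ β)
    (hθmin : ∀ θ' : Fin l → ℝ, (∀ i, α ≤ θ' i ∧ θ' i ≤ β) →
      (C/2) * ‖∑ i, θ i • z i‖^2 - ∑ i, ybar i * θ i
        ≤ (C/2) * ‖∑ i, θ' i • z i‖^2 - ∑ i, ybar i * θ' i)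
    (S : Finset (Fin l))
    (yhat : Fin l → ℝ)
    (hyhat : ∀ i ∈ Sᶜ, yhat i = ybar i - C * ⟪z i, ∑ j ∈ S, θ j • z j⟫) :
    ∀ η : Fin l → ℝ, (∀ i ∈ Sᶜ, α ≤ η i ∧ η i ≤ β) →
      (C/2) * ‖∑ i ∈ Sᶜ, θ i • z i‖^2 - ∑ i ∈ Sᶜ, yhat i * θ i
        ≤ (C/2) * ‖∑ i ∈ Sᶜ, η i • z i‖^2 - ∑ i ∈ Sᶜ, yhat i * η i := by
  intro η hη
  set A : EuclideanSpace ℝ (Fin n) := ∑ j ∈ S, θ j • z j with hA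
  -- key algebraic identity for any coefficients w on Sᶜ
  have key : ∀ w : Fin l → ℝ,
      (C/2) * ‖∑ i, (if i ∈ S then θ i else w i) • z i‖^2
        - ∑ i, ybar i * (if i ∈ S then θ i else w i)
      = ((C/2) * ‖A‖^2 - ∑ i ∈ S, ybar i * θ i)
        + ((C/2) * ‖∑ i ∈ Sᶜ, w i • z i‖^2 - ∑ i ∈ Sᶜ, yhat i * w i) := by
    intro w
    set V : EuclideanSpace ℝ (Fin n) := ∑ i ∈ Sᶜ, w i • z i with hV
    have hsplit : (∑ i, (if i ∈ S then θ i else w i) • z i) = A + V := by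
      rw [← Finset.sum_add_sum_compl S]
      congr 1
      · exact Finset.sum_congr rfl fun i hi => by simp [hi]
      · refine Finset.sum_congr rfl fun i hi => ?_
        have : i ∉ S := Finset.mem_compl.mp hi
        simp [this]
    have hsplit2 : (∑ i, ybar i * (if i ∈ S then θ i else w i))
        = ∑ i ∈ S, ybar i * θ i + ∑ i ∈ Sᶜ, ybar i * w i := by
      rw [← Finset.sum_add_sum_compl S]
      congr 1
      · exact Finset.sum_congr rfl fun i hi => by simp [hi]
      · refine Finset.sum_congr rfl fun i hi => ?_
        have : i ∉ S := Finset.mem_compl.mp hi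
        simp [this]
    have hnorm : ‖A + V‖^2 = ‖A‖^2 + 2 * ⟪A, V⟫ + ‖V‖^2 := norm_add_sq_real A V
    have hinner : ⟪A, V⟫ = ∑ i ∈ Sᶜ, w i * ⟪z i, A⟫ := by
      rw [hV, inner_sum]
      refine Finset.sum_congr rfl fun i hi => ?_
      rw [real_inner_smul_right, real_inner_comm]
    have hyh : ∑ i ∈ Sᶜ, yhat i * w i
        = ∑ i ∈ Sᶜ, (ybar i * w i - C * (w i * ⟪z i, A⟫)) := by
      refine Finset.sum_congr rfl fun i hi => ?_
      rw [hyhat i hi]; ring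
    rw [hsplit, hsplit2, hnorm, hinner, hyh, Finset.sum_sub_distrib,
      ← Finset.mul_sum]
    ring
  have hηbox : ∀ i, α ≤ (if i ∈ S then θ i else η i) ∧ (if i ∈ S then θ i else η i) ≤ β := by
    intro i
    by_cases h : i ∈ S
    · simp [h, hθB i]
    · simpa [h] using hη i (Finset.mem_compl.mpr h)
  have h1 := hθmin (fun i => if i ∈ S then θ i else η i) hηbox
  have hθeq : (fun i => if i ∈ S then θ i else θ i) = θ := by funext i; simp
  have h2 := key θ
  have h3 := key η
  simp only [ite_self] at h2
  rw [h2, h3] at h1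
  linarith
end

section
/- Let C > C₀ > 0, let θ₀ ∈ B minimize the dual objective g_{C₀} over B, and let θ ∈ B minimize g_C over B. Then ‖∑_{i=1}^l θ_i z_i − ((C₀ + C)/(2C)) ∑_{i=1}^l (θ₀)_i z_i‖ ≤ ((C − C₀)/(2C)) ‖∑_{i=1}^l (θ₀)_i z_i‖. -/
open scoped RealInnerProductSpace

lemma aux_scalar (A B : ℝ) (hB : 0 ≤ B)
    (h : ∀ t : ℝ, 0 < t → t ≤ 1 → 0 ≤ A * t + B * t^2) : 0 ≤ A := by
  by_contra h'
  push_neg at h'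
  have hB1 : (0:ℝ) < B + 1 := by linarith
  set t : ℝ := min 1 (-A / (2 * (B + 1))) with ht
  have ht0 : 0 < t := lt_min one_pos (div_pos (by linarith) (by linarith))
  have ht1 : t ≤ 1 := min_le_left _ _
  have h2 : t ≤ -A / (2 * (B + 1)) := min_le_right _ _
  have h3 : (B + 1) * t ≤ -A / 2 := by
    calc (B + 1) * t ≤ (B + 1) * (-A / (2 * (B + 1))) :=
          mul_le_mul_of_nonneg_left h2 hB1.le
      _ = -A / 2 := by field_simp
  have h4 := h t ht0 ht1
  nlinarith [mul_le_mul_of_nonneg_right h3 ht0.le, mul_pos ht0 ht0]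

lemma key_ineq (n l : ℕ) (z : Fin l → EuclideanSpace ℝ (Fin n)) (ybar : Fin l → ℝ)
    (α β : ℝ) (c : ℝ) (hc : 0 < c)
    (a b : Fin l → ℝ) (haB : ∀ i, α ≤ a i ∧ a i ≤ β) (hbB : ∀ i, α ≤ b i ∧ b i ≤ β)
    (hamin : ∀ θ' : Fin l → ℝ, (∀ i, α ≤ θ' i ∧ θ' i ≤ β) →
      (c/2) * ‖∑ i, a i • z i‖^2 - ∑ i, ybar i * a i
        ≤ (c/2) * ‖∑ i, θ' i • z i‖^2 - ∑ i, ybar i * θ' i) :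
    0 ≤ c * ⟪(∑ i, a i • z i), ((∑ i, b i • z i) - ∑ i, a i • z i)⟫
        - ((∑ i, ybar i * b i) - ∑ i, ybar i * a i) := by
  set va := ∑ i, a i • z i with hva
  set vb := ∑ i, b i • z i with hvb
  set Sa := ∑ i, ybar i * a i with hSa
  set Sb := ∑ i, ybar i * b i with hSb
  apply aux_scalar _ ((c/2) * ‖vb - va‖^2) (by positivity)
  intro t ht0 ht1
  set a' : Fin l → ℝ := fun i => a i + t * (b i - a i) with ha'
  have ha'B : ∀ i, α ≤ a' i ∧ a' i ≤ β := by
    intro i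
    obtain ⟨h1, h2⟩ := haB i
    obtain ⟨h3, h4⟩ := hbB i
    constructor <;> simp only [ha'] <;> nlinarith
  have hsum : ∑ i, a' i • z i = va + t • (vb - va) := by
    simp only [ha', add_smul, mul_smul, sub_smul]
    rw [Finset.sum_add_distrib, ← Finset.smul_sum, Finset.sum_sub_distrib]
  have hS : ∑ i, ybar i * a' i = Sa + t * (Sb - Sa) := by
    have : ∀ i ∈ Finset.univ, ybar i * a' i
        = ybar i * a i + t * (ybar i * b i - ybar i * a i) := by
      intro i _; simp only [ha']; ring
    rw [Finset.sum_congr rfl this, Finset.sum_add_distrib, ← Finset.mul_sum,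
      Finset.sum_sub_distrib]
  have hmin := hamin a' ha'B
  rw [hsum, hS] at hmin
  have hexp : ‖va + t • (vb - va)‖^2
      = ‖va‖^2 + 2 * (t * ⟪va, vb - va⟫) + t^2 * ‖vb - va‖^2 := by
    rw [norm_add_sq_real, real_inner_smul_right, norm_smul, mul_pow,
      Real.norm_eq_abs, sq_abs]
  rw [hexp] at hmin
  nlinarith [hmin]

lemma aux_quad (C₀ C nu nv ip : ℝ) (hC₀ : 0 < C₀) (hC : C₀ < C)
    (comb : C * nv^2 + C₀ * nu^2 ≤ (C + C₀) * ip) :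
    nv^2 - 2*((C₀+C)/(2*C))*ip + ((C₀+C)/(2*C))^2*nu^2 ≤ ((C-C₀)/(2*C)*nu)^2 := by
  have hC' : 0 < C := hC₀.trans hC
  rw [← sub_nonneg]
  have h : ((C-C₀)/(2*C)*nu)^2 - (nv^2 - 2*((C₀+C)/(2*C))*ip + ((C₀+C)/(2*C))^2*nu^2)
      = ((C + C₀)*ip - C*nv^2 - C₀*nu^2)/C := by
    field_simp
    ring
  rw [h]
  exact div_nonneg (by linarith) hC'.le

/-- Theorem 5 of the paper: If `θ₀` minimizes `g_{C₀}` and `θ` minimizes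
`g_C` over the box `B = [α,β]^l` with `C > C₀ > 0`, then
`‖∑ᵢ θᵢ zᵢ - ((C₀+C)/(2C)) ∑ᵢ (θ₀)ᵢ zᵢ‖ ≤ ((C-C₀)/(2C)) ‖∑ᵢ (θ₀)ᵢ zᵢ‖`. -/
theorem dual_optimal_estimation (n l : ℕ) (hn : 1 ≤ n) (hl : 1 ≤ l)
    (z : Fin l → EuclideanSpace ℝ (Fin n)) (ybar : Fin l → ℝ)
    (α β : ℝ) (hαβ : α < β) (C₀ C : ℝ) (hC₀ : 0 < C₀) (hC : C₀ < C)
    (θ₀ : Fin l → ℝ) (hθ₀B : ∀ i, α ≤ θ₀ i ∧ θ₀ i ≤ β)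
    (hθ₀min : ∀ θ' : Fin l → ℝ, (∀ i, α ≤ θ' i ∧ θ' i ≤ β) →
      (C₀/2) * ‖∑ i, θ₀ i • z i‖^2 - ∑ i, ybar i * θ₀ i
        ≤ (C₀/2) * ‖∑ i, θ' i • z i‖^2 - ∑ i, ybar i * θ' i)
    (θ : Fin l → ℝ) (hθB : ∀ i, α ≤ θ i ∧ θ i ≤ β)
    (hθmin : ∀ θ' : Fin l → ℝ, (∀ i, α ≤ θ' i ∧ θ' i ≤ β) →
      (C/2) * ‖∑ i, θ i • z i‖^2 - ∑ i, ybar i * θ i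
        ≤ (C/2) * ‖∑ i, θ' i • z i‖^2 - ∑ i, ybar i * θ' i) :
    ‖(∑ i, θ i • z i) - ((C₀ + C)/(2*C)) • ∑ i, θ₀ i • z i‖
      ≤ ((C - C₀)/(2*C)) * ‖∑ i, θ₀ i • z i‖ := by
  have hC' : 0 < C := hC₀.trans hC
  have I₁ := key_ineq n l z ybar α β C₀ hC₀ θ₀ θ hθ₀B hθB hθ₀min
  have I₂ := key_ineq n l z ybar α β C hC' θ θ₀ hθB hθ₀B hθmin
  set u := ∑ i, θ₀ i • z i with hu
  set v := ∑ i, θ i • z i with hv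
  have e1 : ⟪u, v - u⟫ = ⟪u, v⟫ - ‖u‖^2 := by
    rw [inner_sub_right, real_inner_self_eq_norm_sq]
  have e2 : ⟪v, u - v⟫ = ⟪u, v⟫ - ‖v‖^2 := by
    rw [inner_sub_right, real_inner_self_eq_norm_sq, real_inner_comm]
  rw [e1] at I₁
  rw [e2] at I₂
  have comb : C * ‖v‖^2 + C₀ * ‖u‖^2 ≤ (C + C₀) * ⟪u, v⟫ := by nlinarith
  have hdd : 0 ≤ (C - C₀)/(2*C) * ‖u‖ :=
    mul_nonneg (div_nonneg (by linarith) (by linarith)) (norm_nonneg _)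
  have expand : ‖v - ((C₀ + C)/(2*C)) • u‖^2
      = ‖v‖^2 - 2*((C₀+C)/(2*C))*⟪u, v⟫ + ((C₀+C)/(2*C))^2*‖u‖^2 := by
    rw [norm_sub_sq_real, real_inner_smul_right, norm_smul, Real.norm_eq_abs,
      mul_pow, sq_abs, real_inner_comm]
    ring
  have hsq : ‖v - ((C₀ + C)/(2*C)) • u‖^2 ≤ ((C - C₀)/(2*C) * ‖u‖)^2 := by
    rw [expand]
    exact aux_quad C₀ C ‖u‖ ‖v‖ ⟪u, v⟫ hC₀ hC comb
  nlinarith [hsq, norm_nonneg (v - ((C₀ + C)/(2*C)) • u), hdd]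
end

section
/- Let C > C₀ > 0, let θ₀ ∈ B minimize the dual objective g_{C₀} over B, and let θ ∈ B minimize g_C over B. Write v = ∑_{j=1}^l (θ₀)_j z_j. Then for every index i: (1) if ((C + C₀)/2)·⟨v, z_i⟩ − ((C − C₀)/2)·‖v‖·‖z_i‖ > ȳ_i, then θ_i = α; (2) if ((C + C₀)/2)·⟨v, z_i⟩ + ((C − C₀)/2)·‖v‖·‖z_i‖ < ȳ_i, then θ_i = β. -/
open scoped RealInnerProductSpace

/-- Variational inequality for a minimizer of the dual objective over the box. -/
lemma dvi_vi {n l : ℕ} (z : Fin l → EuclideanSpace ℝ (Fin n)) (ybar : Fin l → ℝ)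
    (α β C : ℝ) (hC : 0 < C) (θ : Fin l → ℝ) (hθB : ∀ i, α ≤ θ i ∧ θ i ≤ β)
    (hθmin : ∀ θ' : Fin l → ℝ, (∀ i, α ≤ θ' i ∧ θ' i ≤ β) →
      (C/2) * ‖∑ i, θ i • z i‖^2 - ∑ i, ybar i * θ i
        ≤ (C/2) * ‖∑ i, θ' i • z i‖^2 - ∑ i, ybar i * θ' i)
    (θ' : Fin l → ℝ) (hθ' : ∀ i, α ≤ θ' i ∧ θ' i ≤ β) :
    0 ≤ ∑ i, (C * ⟪∑ j, θ j • z j, z i⟫ - ybar i) * (θ' i - θ i) := by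
  set w := ∑ j, θ j • z j with hw
  set D := ∑ j, (θ' j - θ j) • z j with hD
  have key : ∀ t : ℝ, 0 < t → t ≤ 1 →
      0 ≤ t * (C * ⟪w, D⟫ - ∑ i, ybar i * (θ' i - θ i)) + t^2 * ((C/2) * ‖D‖^2) := by
    intro t ht ht1
    have hbox : ∀ i, α ≤ θ i + t*(θ' i - θ i) ∧ θ i + t*(θ' i - θ i) ≤ β := by
      intro i
      obtain ⟨h1, h2⟩ := hθB i
      obtain ⟨h3, h4⟩ := hθ' i
      constructor <;> nlinarith
    have hsum : ∑ i, (θ i + t*(θ' i - θ i)) • z i = w + t • D := by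
      rw [hw, hD, Finset.smul_sum, ← Finset.sum_add_distrib]
      refine Finset.sum_congr rfl fun i _ => ?_
      rw [add_smul, smul_smul]
    have hy : ∑ i, ybar i * (θ i + t*(θ' i - θ i))
        = ∑ i, ybar i * θ i + t * ∑ i, ybar i * (θ' i - θ i) := by
      rw [Finset.mul_sum, ← Finset.sum_add_distrib]
      refine Finset.sum_congr rfl fun i _ => by ring
    have hmin := hθmin (fun i => θ i + t*(θ' i - θ i)) hbox
    rw [hsum, hy] at hmin
    have hnorm : ‖w + t • D‖^2 = ‖w‖^2 + 2*(t*⟪w,D⟫) + t^2*‖D‖^2 := by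
      rw [norm_add_sq_real, real_inner_smul_right, norm_smul, Real.norm_eq_abs,
        abs_of_pos ht]
      ring
    rw [hnorm] at hmin
    nlinarith [hmin]
  have hid : ∑ i, (C * ⟪w, z i⟫ - ybar i) * (θ' i - θ i)
      = C * ⟪w, D⟫ - ∑ i, ybar i * (θ' i - θ i) := by
    rw [hD, inner_sum]
    simp only [real_inner_smul_right]
    rw [Finset.mul_sum, ← Finset.sum_sub_distrib]
    refine Finset.sum_congr rfl fun i _ => by ring
  rw [hid]
  set S := C * ⟪w, D⟫ - ∑ i, ybar i * (θ' i - θ i) with hS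
  set Q := (C/2) * ‖D‖^2 with hQdef
  have hQ : 0 ≤ Q := by positivity
  by_contra hneg
  push_neg at hneg
  set t := min 1 (-S/(2*(Q+1))) with htdef
  have ht : 0 < t := by
    apply lt_min one_pos
    apply div_pos (by linarith) (by linarith)
  have ht1 : t ≤ 1 := min_le_left _ _
  have htle : t ≤ -S/(2*(Q+1)) := min_le_right _ _
  have h3 : t * (2*(Q+1)) ≤ -S := by
    rw [← le_div_iff₀ (by linarith)]
    exact htle
  have h1 := key t ht ht1
  have h2 : 0 ≤ S + t*Q := by
    have h' : t*0 ≤ t*(S + t*Q) := by nlinarith [h1]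
    exact le_of_mul_le_mul_left (by linarith [h']) ht
  nlinarith [mul_nonneg ht.le hQ]

lemma inner_sum_smul' {n l : ℕ} (z : Fin l → EuclideanSpace ℝ (Fin n)) (a : Fin l → ℝ)
    (w : EuclideanSpace ℝ (Fin n)) :
    ∑ i, ⟪w, z i⟫ * a i = ⟪w, ∑ i, a i • z i⟫ := by
  rw [inner_sum]
  refine Finset.sum_congr rfl fun i _ => ?_
  rw [real_inner_smul_right]; ring

set_option maxHeartbeats 1000000 in
/-- DVI rule, Theorem 6 / Corollary 7 of the paper: Let `C > C₀ > 0`,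
let `θ₀` minimize `g_{C₀}` and `θ` minimize `g_C` over the box `B = [α,β]^l`, and set
`v = ∑ⱼ (θ₀)ⱼ zⱼ`. Then for every index `i`:
(1) `((C+C₀)/2)⟨v,zᵢ⟩ - ((C-C₀)/2)‖v‖‖zᵢ‖ > ȳᵢ` implies `θᵢ = α`;
(2) `((C+C₀)/2)⟨v,zᵢ⟩ + ((C-C₀)/2)‖v‖‖zᵢ‖ < ȳᵢ` implies `θᵢ = β`. -/
theorem dvi_screening_rule (n l : ℕ) (hn : 1 ≤ n) (hl : 1 ≤ l)
    (z : Fin l → EuclideanSpace ℝ (Fin n)) (ybar : Fin l → ℝ)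
    (α β : ℝ) (hαβ : α < β) (C₀ C : ℝ) (hC₀ : 0 < C₀) (hC : C₀ < C)
    (θ₀ : Fin l → ℝ) (hθ₀B : ∀ i, α ≤ θ₀ i ∧ θ₀ i ≤ β)
    (hθ₀min : ∀ θ' : Fin l → ℝ, (∀ i, α ≤ θ' i ∧ θ' i ≤ β) →
      (C₀/2) * ‖∑ i, θ₀ i • z i‖^2 - ∑ i, ybar i * θ₀ i
        ≤ (C₀/2) * ‖∑ i, θ' i • z i‖^2 - ∑ i, ybar i * θ' i)
    (θ : Fin l → ℝ) (hθB : ∀ i, α ≤ θ i ∧ θ i ≤ β)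
    (hθmin : ∀ θ' : Fin l → ℝ, (∀ i, α ≤ θ' i ∧ θ' i ≤ β) →
      (C/2) * ‖∑ i, θ i • z i‖^2 - ∑ i, ybar i * θ i
        ≤ (C/2) * ‖∑ i, θ' i • z i‖^2 - ∑ i, ybar i * θ' i)
    (v : EuclideanSpace ℝ (Fin n)) (hv : v = ∑ j, θ₀ j • z j) :
    ∀ i : Fin l,
      (((C + C₀)/2) * ⟪v, z i⟫ - ((C - C₀)/2) * ‖v‖ * ‖z i‖ > ybar i → θ i = α) ∧
      (((C + C₀)/2) * ⟪v, z i⟫ + ((C - C₀)/2) * ‖v‖ * ‖z i‖ < ybar i → θ i = β) := by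
  have hCpos : (0:ℝ) < C := hC₀.trans hC
  set w := ∑ j, θ j • z j with hw
  -- variational inequalities
  have hvi1 := dvi_vi z ybar α β C hCpos θ hθB hθmin θ₀ hθ₀B
  have hvi2 := dvi_vi z ybar α β C₀ hC₀ θ₀ hθ₀B hθ₀min θ hθB
  rw [← hw] at hvi1
  rw [← hv] at hvi2
  have hvw : v - w = ∑ j, (θ₀ j - θ j) • z j := by
    rw [hv, hw, ← Finset.sum_sub_distrib]
    exact Finset.sum_congr rfl fun j _ => (sub_smul _ _ _).symm
  have hwv : w - v = ∑ j, (θ j - θ₀ j) • z j := by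
    rw [hv, hw, ← Finset.sum_sub_distrib]
    exact Finset.sum_congr rfl fun j _ => (sub_smul _ _ _).symm
  have e1 : ∑ i, ⟪w, z i⟫ * (θ₀ i - θ i) = ⟪w, v - w⟫ := by
    rw [inner_sum_smul', ← hvw]
  have e2 : ∑ i, ⟪v, z i⟫ * (θ i - θ₀ i) = ⟪v, w - v⟫ := by
    rw [inner_sum_smul', ← hwv]
  have s1 : ∑ i, (C * ⟪w, z i⟫ - ybar i) * (θ₀ i - θ i)
      = C * (∑ i, ⟪w, z i⟫ * (θ₀ i - θ i)) - ∑ i, ybar i * (θ₀ i - θ i) := by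
    rw [Finset.mul_sum, ← Finset.sum_sub_distrib]
    exact Finset.sum_congr rfl fun i _ => by ring
  have s2 : ∑ i, (C₀ * ⟪v, z i⟫ - ybar i) * (θ i - θ₀ i)
      = C₀ * (∑ i, ⟪v, z i⟫ * (θ i - θ₀ i)) - ∑ i, ybar i * (θ i - θ₀ i) := by
    rw [Finset.mul_sum, ← Finset.sum_sub_distrib]
    exact Finset.sum_congr rfl fun i _ => by ring
  have sy : ∑ i, ybar i * (θ i - θ₀ i) = -∑ i, ybar i * (θ₀ i - θ i) := by
    rw [← Finset.sum_neg_distrib]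
    exact Finset.sum_congr rfl fun i _ => by ring
  rw [s1, e1] at hvi1
  rw [s2, e2, sy] at hvi2
  have a1 : ⟪w, v - w⟫ = ⟪w, v⟫ - ‖w‖^2 := by
    rw [inner_sub_right, real_inner_self_eq_norm_sq]
  have a2 : ⟪v, w - v⟫ = ⟪w, v⟫ - ‖v‖^2 := by
    rw [inner_sub_right, real_inner_self_eq_norm_sq, real_inner_comm]
  rw [a1] at hvi1
  rw [a2] at hvi2
  have hkey : 0 ≤ C * ⟪w, v⟫ - C * ‖w‖^2 + C₀ * ⟪w, v⟫ - C₀ * ‖v‖^2 := by nlinarith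
  -- ball bound
  have hball2 : ‖C • w - ((C+C₀)/2) • v‖^2 ≤ (((C-C₀)/2) * ‖v‖)^2 := by
    have hnw : ‖C • w‖ = C * ‖w‖ := by
      rw [norm_smul, Real.norm_eq_abs, abs_of_pos hCpos]
    have hnv : ‖((C+C₀)/2) • v‖ = ((C+C₀)/2) * ‖v‖ := by
      rw [norm_smul, Real.norm_eq_abs, abs_of_pos (by linarith)]
    have expand : ‖C • w - ((C+C₀)/2) • v‖^2
        = C^2 * ‖w‖^2 - C * (C+C₀) * ⟪w, v⟫ + ((C+C₀)/2)^2 * ‖v‖^2 := by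
      rw [norm_sub_sq_real, real_inner_smul_left, real_inner_smul_right, hnw, hnv]
      ring
    rw [expand]
    nlinarith [mul_nonneg hCpos.le hkey]
  have hball : ‖C • w - ((C+C₀)/2) • v‖ ≤ ((C-C₀)/2) * ‖v‖ := by
    have h0 : 0 ≤ ((C-C₀)/2) * ‖v‖ := mul_nonneg (by linarith) (norm_nonneg _)
    have h' := Real.sqrt_le_sqrt hball2
    rwa [Real.sqrt_sq (norm_nonneg _), Real.sqrt_sq h0] at h'
  intro i
  have hcs : |⟪C • w - ((C+C₀)/2) • v, z i⟫| ≤ ((C-C₀)/2) * ‖v‖ * ‖z i‖ := by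
    calc |⟪C • w - ((C+C₀)/2) • v, z i⟫|
        ≤ ‖C • w - ((C+C₀)/2) • v‖ * ‖z i‖ := abs_real_inner_le_norm _ _
      _ ≤ (((C-C₀)/2) * ‖v‖) * ‖z i‖ :=
          mul_le_mul_of_nonneg_right hball (norm_nonneg _)
      _ = ((C-C₀)/2) * ‖v‖ * ‖z i‖ := by ring
  have hinn : ⟪C • w - ((C+C₀)/2) • v, z i⟫
      = C * ⟪w, z i⟫ - ((C+C₀)/2) * ⟪v, z i⟫ := by
    rw [inner_sub_left, real_inner_smul_left, real_inner_smul_left]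
  rw [hinn] at hcs
  obtain ⟨hlo, hhi⟩ := abs_le.mp hcs
  constructor
  · intro h1
    have hG : 0 < C * ⟪w, z i⟫ - ybar i := by linarith
    have hbox : ∀ j, α ≤ Function.update θ i α j ∧ Function.update θ i α j ≤ β := by
      intro j
      by_cases hj : j = i
      · subst hj; simp only [Function.update_self]; exact ⟨le_refl _, hαβ.le⟩
      · rw [Function.update_of_ne hj]; exact hθB j
    have hvi := dvi_vi z ybar α β C hCpos θ hθB hθmin (Function.update θ i α) hbox
    rw [← hw] at hvi
    have hred : ∑ j, (C * ⟪w, z j⟫ - ybar j) * (Function.update θ i α j - θ j)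
        = (C * ⟪w, z i⟫ - ybar i) * (α - θ i) := by
      rw [Finset.sum_eq_single i]
      · rw [Function.update_self]
      · intro j _ hj; rw [Function.update_of_ne hj]; ring
      · intro h; exact absurd (Finset.mem_univ i) h
    rw [hred] at hvi
    have h2 : 0 ≤ α - θ i := by
      have h' : (C * ⟪w, z i⟫ - ybar i) * 0 ≤ (C * ⟪w, z i⟫ - ybar i) * (α - θ i) := by
        linarith [hvi]
      exact le_of_mul_le_mul_left h' hG
    linarith [(hθB i).1]
  · intro h1
    have hG : C * ⟪w, z i⟫ - ybar i < 0 := by linarith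
    have hbox : ∀ j, α ≤ Function.update θ i β j ∧ Function.update θ i β j ≤ β := by
      intro j
      by_cases hj : j = i
      · subst hj; simp only [Function.update_self]; exact ⟨hαβ.le, le_refl _⟩
      · rw [Function.update_of_ne hj]; exact hθB j
    have hvi := dvi_vi z ybar α β C hCpos θ hθB hθmin (Function.update θ i β) hbox
    rw [← hw] at hvi
    have hred : ∑ j, (C * ⟪w, z j⟫ - ybar j) * (Function.update θ i β j - θ j)
        = (C * ⟪w, z i⟫ - ybar i) * (β - θ i) := by
      rw [Finset.sum_eq_single i]
      · rw [Function.update_self]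
      · intro j _ hj; rw [Function.update_of_ne hj]; ring
      · intro h; exact absurd (Finset.mem_univ i) h
    rw [hred] at hvi
    have h2 : β - θ i ≤ 0 := by
      by_contra hcon
      push_neg at hcon
      have := mul_neg_of_neg_of_pos hG hcon
      linarith
    linarith [(hθB i).2]
end

section
/- Let C_{k+1} > C_k > 0, let θ^{(k)} ∈ B minimize the dual objective g_{C_k} over B, and let θ^{(k+1)} ∈ B minimize g_{C_{k+1}} over B. Define w_k = −C_k ∑_{j=1}^l θ^{(k)}_j z_j. Then for every index i: (1) if −((C_k + C_{k+1})/(2C_k))·⟨w_k, z_i⟩ − ((C_{k+1} − C_k)/(2C_k))·‖w_k‖·‖z_i‖ > ȳ_i, then θ^{(k+1)}_i = α; (2) if −((C_k + C_{k+1})/(2C_k))·⟨w_k, z_i⟩ + ((C_{k+1} − C_k)/(2C_k))·‖w_k‖·‖z_i‖ < ȳ_i, then θ^{(k+1)}_i = β. -/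
open scoped RealInnerProductSpace

/-- Variational inequality at a minimizer of `θ ↦ (C/2)‖∑ θᵢ zᵢ‖² − ∑ ȳᵢ θᵢ` over the box. -/
lemma dvi_dir_ineq {n l : ℕ} (z : Fin l → EuclideanSpace ℝ (Fin n)) (ybar : Fin l → ℝ)
    (α β C : ℝ) (hC : 0 < C)
    (θ : Fin l → ℝ) (hθB : ∀ i, α ≤ θ i ∧ θ i ≤ β)
    (hmin : ∀ θ' : Fin l → ℝ, (∀ i, α ≤ θ' i ∧ θ' i ≤ β) →
      (C/2) * ‖∑ i, θ i • z i‖^2 - ∑ i, ybar i * θ i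
        ≤ (C/2) * ‖∑ i, θ' i • z i‖^2 - ∑ i, ybar i * θ' i)
    (θ' : Fin l → ℝ) (hθ'B : ∀ i, α ≤ θ' i ∧ θ' i ≤ β) :
    0 ≤ C * ⟪∑ i, θ i • z i, (∑ i, θ' i • z i) - ∑ i, θ i • z i⟫
        - ∑ i, ybar i * (θ' i - θ i) := by
  set u := ∑ i, θ i • z i with hu
  set u' := ∑ i, θ' i • z i with hu'
  set d := u' - u with hd
  set L := C * ⟪u, d⟫ - ∑ i, ybar i * (θ' i - θ i) with hL
  have ht : ∀ t : ℝ, 0 ≤ t → t ≤ 1 → 0 ≤ t * L + (C/2) * t^2 * ‖d‖^2 := by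
    intro t ht0 ht1
    set θt := fun i => θ i + t * (θ' i - θ i) with hθt
    have hθtB : ∀ i, α ≤ θt i ∧ θt i ≤ β := by
      intro i
      obtain ⟨h1, h2⟩ := hθB i
      obtain ⟨h3, h4⟩ := hθ'B i
      constructor <;> simp only [hθt] <;> nlinarith
    have hsum : ∑ i, θt i • z i = u + t • d := by
      rw [hd, hu, hu', smul_sub, Finset.smul_sum, Finset.smul_sum,
        ← Finset.sum_sub_distrib, ← Finset.sum_add_distrib]
      apply Finset.sum_congr rfl
      intro j _
      simp only [hθt]
      rw [add_smul, mul_smul, sub_smul, smul_sub]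
    have hnorm : ‖u + t • d‖^2 = ‖u‖^2 + 2 * (t * ⟪u, d⟫) + t^2 * ‖d‖^2 := by
      rw [norm_add_sq_real, real_inner_smul_right, norm_smul, Real.norm_eq_abs,
        mul_pow, sq_abs]
    have hlin : ∑ i, ybar i * θt i
        = (∑ i, ybar i * θ i) + t * ∑ i, ybar i * (θ' i - θ i) := by
      rw [Finset.mul_sum, ← Finset.sum_add_distrib]
      apply Finset.sum_congr rfl
      intro i _
      simp only [hθt]; ring
    have := hmin θt hθtB
    rw [hsum, hnorm, hlin] at this
    simp only [hL]
    nlinarith [this]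
  by_contra hneg
  push_neg at hneg
  rcases eq_or_lt_of_le (sq_nonneg ‖d‖) with h0 | hpos
  · have := ht 1 zero_le_one le_rfl
    nlinarith
  · set t := min 1 (-L / (C * ‖d‖^2)) with htdef
    have hCd : 0 < C * ‖d‖^2 := by positivity
    have ht0 : 0 < t := by
      apply lt_min one_pos
      apply div_pos (by linarith) hCd
    have ht1 : t ≤ 1 := min_le_left _ _
    have ht2 : t ≤ -L / (C * ‖d‖^2) := min_le_right _ _
    have h3 : t * (C * ‖d‖^2) ≤ -L := by
      exact (le_div_iff₀ hCd).mp ht2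
    have := ht t ht0.le ht1
    nlinarith

set_option maxHeartbeats 1000000 in
/-- DVI rule in primal form, Corollary 8 of the paper: Let
`C_{k+1} > C_k > 0`, let `θk` minimize `g_{C_k}` and `θk1` minimize `g_{C_{k+1}}` over
the box `B = [α,β]^l`, and set `w_k = -C_k ∑ⱼ θkⱼ zⱼ`. Then for every index `i`:
(1) `-((C_k+C_{k+1})/(2C_k))⟨w_k,zᵢ⟩ - ((C_{k+1}-C_k)/(2C_k))‖w_k‖‖zᵢ‖ > ȳᵢ` implies
    `θk1ᵢ = α`;
(2) `-((C_k+C_{k+1})/(2C_k))⟨w_k,zᵢ⟩ + ((C_{k+1}-C_k)/(2C_k))‖w_k‖‖zᵢ‖ < ȳᵢ` implies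
    `θk1ᵢ = β`. -/
theorem dvi_screening_rule_primal (n l : ℕ) (hn : 1 ≤ n) (hl : 1 ≤ l)
    (z : Fin l → EuclideanSpace ℝ (Fin n)) (ybar : Fin l → ℝ)
    (α β : ℝ) (hαβ : α < β) (Ck Ck1 : ℝ) (hCk : 0 < Ck) (hCk1 : Ck < Ck1)
    (θk : Fin l → ℝ) (hθkB : ∀ i, α ≤ θk i ∧ θk i ≤ β)
    (hθkmin : ∀ θ' : Fin l → ℝ, (∀ i, α ≤ θ' i ∧ θ' i ≤ β) →
      (Ck/2) * ‖∑ i, θk i • z i‖^2 - ∑ i, ybar i * θk i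
        ≤ (Ck/2) * ‖∑ i, θ' i • z i‖^2 - ∑ i, ybar i * θ' i)
    (θk1 : Fin l → ℝ) (hθk1B : ∀ i, α ≤ θk1 i ∧ θk1 i ≤ β)
    (hθk1min : ∀ θ' : Fin l → ℝ, (∀ i, α ≤ θ' i ∧ θ' i ≤ β) →
      (Ck1/2) * ‖∑ i, θk1 i • z i‖^2 - ∑ i, ybar i * θk1 i
        ≤ (Ck1/2) * ‖∑ i, θ' i • z i‖^2 - ∑ i, ybar i * θ' i)
    (wk : EuclideanSpace ℝ (Fin n)) (hwk : wk = -(Ck • ∑ j, θk j • z j)) :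
    ∀ i : Fin l,
      (-((Ck + Ck1)/(2*Ck)) * ⟪wk, z i⟫ - ((Ck1 - Ck)/(2*Ck)) * ‖wk‖ * ‖z i‖ > ybar i →
        θk1 i = α) ∧
      (-((Ck + Ck1)/(2*Ck)) * ⟪wk, z i⟫ + ((Ck1 - Ck)/(2*Ck)) * ‖wk‖ * ‖z i‖ < ybar i →
        θk1 i = β) := by
  have hCk1pos : 0 < Ck1 := lt_trans hCk hCk1
  set u := ∑ j, θk j • z j with hu
  set v := ∑ j, θk1 j • z j with hv
  -- VI combination
  have hVI1 := dvi_dir_ineq z ybar α β Ck hCk θk hθkB hθkmin θk1 hθk1B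
  have hVI2 := dvi_dir_ineq z ybar α β Ck1 hCk1pos θk1 hθk1B hθk1min θk hθkB
  have hsumneg : ∑ i, ybar i * (θk i - θk1 i) = -∑ i, ybar i * (θk1 i - θk i) := by
    rw [← Finset.sum_neg_distrib]
    apply Finset.sum_congr rfl; intro i _; ring
  rw [hsumneg] at hVI2
  -- expand inner products
  have hexp1 : ⟪u, v - u⟫ = ⟪u, v⟫ - ‖u‖^2 := by
    rw [inner_sub_right, real_inner_self_eq_norm_sq]
  have hexp2 : ⟪v, u - v⟫ = ⟪u, v⟫ - ‖v‖^2 := by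
    rw [inner_sub_right, real_inner_self_eq_norm_sq, real_inner_comm]
  rw [hexp1] at hVI1
  rw [hexp2] at hVI2
  have hcomb : Ck * ‖u‖^2 + Ck1 * ‖v‖^2 ≤ (Ck + Ck1) * ⟪u, v⟫ := by nlinarith
  -- the key ball bound
  set e := Ck1 • v - ((Ck + Ck1)/2) • u with he
  have hebound : ‖e‖^2 ≤ ((Ck1 - Ck)/2)^2 * ‖u‖^2 := by
    have : ‖e‖^2 = Ck1^2 * ‖v‖^2 - 2 * (Ck1 * ((Ck + Ck1)/2) * ⟪u, v⟫)
        + ((Ck + Ck1)/2)^2 * ‖u‖^2 := by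
      rw [he, norm_sub_sq_real, real_inner_smul_left, real_inner_smul_right,
        norm_smul, norm_smul, real_inner_comm v u]
      rw [Real.norm_eq_abs, Real.norm_eq_abs, mul_pow, mul_pow, sq_abs, sq_abs]
      ring
    nlinarith
  have henorm : ‖e‖ ≤ ((Ck1 - Ck)/2) * ‖u‖ := by
    have h1 : (0:ℝ) ≤ ((Ck1 - Ck)/2) * ‖u‖ := mul_nonneg (by linarith) (norm_nonneg _)
    nlinarith [norm_nonneg e]
  intro i
  -- per-coordinate VI for θk1
  have hcoord : ∀ s, α ≤ s → s ≤ β →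
      0 ≤ (s - θk1 i) * (Ck1 * ⟪v, z i⟫ - ybar i) := by
    intro s hs1 hs2
    set θ' := Function.update θk1 i s with hθ'
    have hθ'B : ∀ j, α ≤ θ' j ∧ θ' j ≤ β := by
      intro j
      rcases eq_or_ne j i with rfl | hji
      · simp [hθ', hs1, hs2]
      · simp [hθ', Function.update_of_ne hji, hθk1B j]
    have hsum : ∑ j, θ' j • z j = v + (s - θk1 i) • z i := by
      have key : ∀ j, θ' j • z j = Function.update (fun j => θk1 j • z j) i (s • z i) j := by
        intro j
        rcases eq_or_ne j i with rfl | hji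
        · simp [hθ']
        · simp [hθ', Function.update_of_ne hji]
      rw [Finset.sum_congr rfl (fun j _ => key j),
        Finset.sum_update_of_mem (Finset.mem_univ i), hv,
        ← Finset.sum_erase_add _ _ (Finset.mem_univ i), Finset.sdiff_singleton_eq_erase]
      rw [sub_smul]
      abel
    have hlin : ∑ j, ybar j * (θ' j - θk1 j) = ybar i * (s - θk1 i) := by
      rw [Finset.sum_eq_single i]
      · simp [hθ']
      · intro j _ hji
        simp [hθ', Function.update_of_ne hji]
      · simp
    have := dvi_dir_ineq z ybar α β Ck1 hCk1pos θk1 hθk1B hθk1min θ' hθ'B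
    rw [hsum, hlin] at this
    have hinner : ⟪v, v + (s - θk1 i) • z i - v⟫ = (s - θk1 i) * ⟪v, z i⟫ := by
      rw [add_sub_cancel_left, real_inner_smul_right]
    rw [hinner] at this
    nlinarith [this]
  -- rewrite the hypothesis quantities
  have hwkinner : ⟪wk, z i⟫ = -(Ck * ⟪u, z i⟫) := by
    rw [hwk, inner_neg_left, real_inner_smul_left]
  have hwknorm : ‖wk‖ = Ck * ‖u‖ := by
    rw [hwk, norm_neg, norm_smul, Real.norm_eq_abs, abs_of_pos hCk]
  have hCkne : Ck ≠ 0 := ne_of_gt hCk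
  -- bound on ⟪e, z i⟫
  have hcs : |⟪e, z i⟫| ≤ ((Ck1 - Ck)/2) * ‖u‖ * ‖z i‖ := by
    calc |⟪e, z i⟫| ≤ ‖e‖ * ‖z i‖ := abs_real_inner_le_norm e (z i)
      _ ≤ ((Ck1 - Ck)/2) * ‖u‖ * ‖z i‖ := by
          apply mul_le_mul_of_nonneg_right henorm (norm_nonneg _)
  have heinner : ⟪e, z i⟫ = Ck1 * ⟪v, z i⟫ - ((Ck + Ck1)/2) * ⟪u, z i⟫ := by
    rw [he, inner_sub_left, real_inner_smul_left, real_inner_smul_left]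
  rw [abs_le] at hcs
  constructor
  · intro hhyp
    have hhyp' : ((Ck + Ck1)/2) * ⟪u, z i⟫ - ((Ck1 - Ck)/2) * ‖u‖ * ‖z i‖ > ybar i := by
      rw [hwkinner, hwknorm] at hhyp
      have e1 : -((Ck + Ck1)/(2*Ck)) * -(Ck * ⟪u, z i⟫) = ((Ck + Ck1)/2) * ⟪u, z i⟫ := by
        field_simp
      have e2 : ((Ck1 - Ck)/(2*Ck)) * (Ck * ‖u‖) * ‖z i‖
          = ((Ck1 - Ck)/2) * ‖u‖ * ‖z i‖ := by
        field_simp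
      rw [e1, e2] at hhyp
      exact hhyp
    have hD : 0 < Ck1 * ⟪v, z i⟫ - ybar i := by
      have := hcs.1
      rw [heinner] at this
      linarith
    have h1 := hcoord α le_rfl hαβ.le
    have h2 := (hθk1B i).1
    nlinarith
  · intro hhyp
    have hhyp' : ((Ck + Ck1)/2) * ⟪u, z i⟫ + ((Ck1 - Ck)/2) * ‖u‖ * ‖z i‖ < ybar i := by
      rw [hwkinner, hwknorm] at hhyp
      have e1 : -((Ck + Ck1)/(2*Ck)) * -(Ck * ⟪u, z i⟫) = ((Ck + Ck1)/2) * ⟪u, z i⟫ := by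
        field_simp
      have e2 : ((Ck1 - Ck)/(2*Ck)) * (Ck * ‖u‖) * ‖z i‖
          = ((Ck1 - Ck)/2) * ‖u‖ * ‖z i‖ := by
        field_simp
      rw [e1, e2] at hhyp
      exact hhyp
    have hD : Ck1 * ⟪v, z i⟫ - ybar i < 0 := by
      have := hcs.2
      rw [heinner] at this
      linarith
    have h1 := hcoord β hαβ.le le_rfl
    have h2 := (hθk1B i).2
    nlinarith
end

section
/- Let C_{k+1} > C_k > 0, let θ^{(k)} ∈ [0,1]^l minimize the SVM dual objective g_{C_k} over [0,1]^l, and let θ^{(k+1)} ∈ [0,1]^l minimize g_{C_{k+1}} over [0,1]^l. Write v = ∑_{j=1}^l θ^{(k)}_j x̄_j. Then for every index i: (1) if ((C_{k+1} + C_k)/2)·⟨v, x̄_i⟩ − ((C_{k+1} − C_k)/2)·‖v‖·‖x̄_i‖ > 1, then θ^{(k+1)}_i = 0; (2) if ((C_{k+1} + C_k)/2)·⟨v, x̄_i⟩ + ((C_{k+1} − C_k)/2)·‖v‖·‖x̄_i‖ < 1, then θ^{(k+1)}_i = 1. -/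
open scoped RealInnerProductSpace

lemma svm_vi {n l : ℕ} (xbar : Fin l → EuclideanSpace ℝ (Fin n)) (C : ℝ) (hC : 0 < C)
    (θ : Fin l → ℝ)
    (hmin : ∀ θ' : Fin l → ℝ, (∀ i, 0 ≤ θ' i ∧ θ' i ≤ 1) →
      (C/2) * ‖∑ i, θ i • xbar i‖^2 - ∑ i, θ i
        ≤ (C/2) * ‖∑ i, θ' i • xbar i‖^2 - ∑ i, θ' i)
    (θ' : Fin l → ℝ) (hθ : ∀ i, 0 ≤ θ i ∧ θ i ≤ 1) (hθ' : ∀ i, 0 ≤ θ' i ∧ θ' i ≤ 1) :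
    0 ≤ C * ⟪∑ i, θ i • xbar i, (∑ i, θ' i • xbar i) - ∑ i, θ i • xbar i⟫
        - ((∑ i, θ' i) - ∑ i, θ i) := by
  set u : EuclideanSpace ℝ (Fin n) := ∑ i, θ i • xbar i with hu
  set u' : EuclideanSpace ℝ (Fin n) := ∑ i, θ' i • xbar i with hu'
  set w : EuclideanSpace ℝ (Fin n) := u' - u with hw
  set S : ℝ := ∑ i, θ i with hS
  set S' : ℝ := ∑ i, θ' i with hS'
  set L : ℝ := C * ⟪u, w⟫ - (S' - S) with hL
  set Q : ℝ := (C/2) * ‖w‖^2 with hQ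
  have hQ0 : 0 ≤ Q := by positivity
  have key : ∀ t : ℝ, 0 ≤ t → t ≤ 1 → 0 ≤ t * L + t^2 * Q := by
    intro t ht0 ht1
    have hbox : ∀ i, 0 ≤ θ i + t * (θ' i - θ i) ∧ θ i + t * (θ' i - θ i) ≤ 1 := by
      intro i
      obtain ⟨h1, h2⟩ := hθ i
      obtain ⟨h3, h4⟩ := hθ' i
      constructor <;> nlinarith
    have hsum : ∑ i, (θ i + t * (θ' i - θ i)) • xbar i = u + t • w := by
      rw [hw, hu, hu']
      simp only [add_smul, mul_smul, sub_smul, Finset.sum_add_distrib, smul_sub,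
        Finset.smul_sum, Finset.sum_sub_distrib]
    have hsum2 : ∑ i, (θ i + t * (θ' i - θ i)) = S + t * (S' - S) := by
      rw [hS, hS']
      rw [Finset.sum_add_distrib, ← Finset.mul_sum, Finset.sum_sub_distrib]
    have hmin' := hmin (fun i => θ i + t * (θ' i - θ i)) hbox
    rw [hsum, hsum2] at hmin'
    have hnorm : ‖u + t • w‖^2 = ‖u‖^2 + 2 * (t * ⟪u, w⟫) + t^2 * ‖w‖^2 := by
      rw [norm_add_sq_real, real_inner_smul_right, norm_smul, mul_pow]
      simp [sq_abs]
    rw [hnorm] at hmin'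
    rw [hL, hQ]
    nlinarith [hmin']
  by_contra hcon
  push_neg at hcon
  set t : ℝ := min 1 (-L / (2 * Q + 2)) with ht
  have hLneg : L < 0 := hcon
  have htpos : 0 < t := by
    exact lt_min one_pos (div_pos (by linarith) (by linarith))
  have ht1 : t ≤ 1 := min_le_left _ _
  have ht2 : t ≤ -L / (2 * Q + 2) := min_le_right _ _
  have ht3 : t * (2 * Q + 2) ≤ -L := by
    rw [div_eq_mul_inv] at ht2
    have h2Q : (0:ℝ) < 2 * Q + 2 := by linarith
    calc t * (2 * Q + 2) ≤ (-L * (2 * Q + 2)⁻¹) * (2 * Q + 2) := by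
          apply mul_le_mul_of_nonneg_right ht2 (le_of_lt h2Q)
      _ = -L := by field_simp
  have := key t (le_of_lt htpos) ht1
  nlinarith [mul_pos htpos htpos, this, ht3]

set_option maxHeartbeats 1000000

/-- DVI$_s^*$ for SVM, Corollary 10 of the paper: Let
`C_{k+1} > C_k > 0`, let `θk` minimize the SVM dual `g_{C_k}` and `θk1` minimize
`g_{C_{k+1}}` over `[0,1]^l`, and set `v = ∑ⱼ θkⱼ x̄ⱼ`. Then for every index `i`:
(1) `((C_{k+1}+C_k)/2)⟨v,x̄ᵢ⟩ - ((C_{k+1}-C_k)/2)‖v‖‖x̄ᵢ‖ > 1` implies `θk1ᵢ = 0`;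
(2) `((C_{k+1}+C_k)/2)⟨v,x̄ᵢ⟩ + ((C_{k+1}-C_k)/2)‖v‖‖x̄ᵢ‖ < 1` implies `θk1ᵢ = 1`. -/
theorem dvi_svm_dual (n l : ℕ) (hn : 1 ≤ n) (hl : 1 ≤ l)
    (x : Fin l → EuclideanSpace ℝ (Fin n)) (y : Fin l → ℝ)
    (hy : ∀ i, y i = 1 ∨ y i = -1)
    (xbar : Fin l → EuclideanSpace ℝ (Fin n)) (hxbar : ∀ i, xbar i = y i • x i)
    (Ck Ck1 : ℝ) (hCk : 0 < Ck) (hCk1 : Ck < Ck1)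
    (θk : Fin l → ℝ) (hθkB : ∀ i, 0 ≤ θk i ∧ θk i ≤ 1)
    (hθkmin : ∀ θ' : Fin l → ℝ, (∀ i, 0 ≤ θ' i ∧ θ' i ≤ 1) →
      (Ck/2) * ‖∑ i, θk i • xbar i‖^2 - ∑ i, θk i
        ≤ (Ck/2) * ‖∑ i, θ' i • xbar i‖^2 - ∑ i, θ' i)
    (θk1 : Fin l → ℝ) (hθk1B : ∀ i, 0 ≤ θk1 i ∧ θk1 i ≤ 1)
    (hθk1min : ∀ θ' : Fin l → ℝ, (∀ i, 0 ≤ θ' i ∧ θ' i ≤ 1) →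
      (Ck1/2) * ‖∑ i, θk1 i • xbar i‖^2 - ∑ i, θk1 i
        ≤ (Ck1/2) * ‖∑ i, θ' i • xbar i‖^2 - ∑ i, θ' i)
    (v : EuclideanSpace ℝ (Fin n)) (hv : v = ∑ j, θk j • xbar j) :
    ∀ i : Fin l,
      (((Ck1 + Ck)/2) * ⟪v, xbar i⟫ - ((Ck1 - Ck)/2) * ‖v‖ * ‖xbar i‖ > 1 →
        θk1 i = 0) ∧
      (((Ck1 + Ck)/2) * ⟪v, xbar i⟫ + ((Ck1 - Ck)/2) * ‖v‖ * ‖xbar i‖ < 1 →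
        θk1 i = 1) := by
  have hCk1pos : 0 < Ck1 := lt_trans hCk hCk1
  set u : EuclideanSpace ℝ (Fin n) := ∑ j, θk j • xbar j with hu
  set u' : EuclideanSpace ℝ (Fin n) := ∑ j, θk1 j • xbar j with hu'
  -- the two variational inequalities
  have hA := svm_vi xbar Ck hCk θk hθkmin θk1 hθkB hθk1B
  have hB := svm_vi xbar Ck1 hCk1pos θk1 hθk1min θk hθk1B hθkB
  rw [← hu, ← hu'] at hA hB
  set p : ℝ := ⟪u, u⟫ with hp
  set q : ℝ := ⟪u, u'⟫ with hq
  set s : ℝ := ⟪u', u'⟫ with hs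
  have hqc : ⟪u', u⟫ = q := (real_inner_comm u' u).symm
  have hA' : 0 ≤ Ck * (q - p) - ((∑ i, θk1 i) - ∑ i, θk i) := by
    rw [inner_sub_right] at hA; rw [← hp, ← hq] at hA; exact hA
  have hB' : 0 ≤ Ck1 * (q - s) - ((∑ i, θk i) - ∑ i, θk1 i) := by
    rw [inner_sub_right, hqc] at hB; rw [← hs] at hB; exact hB
  have hcomb : Ck1 * s ≤ (Ck1 + Ck) * q - Ck * p := by nlinarith [hA', hB']
  -- the ball bound
  set z : EuclideanSpace ℝ (Fin n) := Ck1 • u' - ((Ck1 + Ck)/2) • u with hz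
  have hzsq : ‖z‖^2 = Ck1^2 * s - Ck1 * (Ck1 + Ck) * q + ((Ck1 + Ck)/2)^2 * p := by
    rw [← real_inner_self_eq_norm_sq, hz]
    simp only [inner_sub_left, inner_sub_right, real_inner_smul_left, real_inner_smul_right]
    rw [hqc]; rw [← hp, ← hq, ← hs]; ring
  have hpnorm : p = ‖u‖^2 := by rw [hp, real_inner_self_eq_norm_sq]
  have hball_sq : ‖z‖^2 ≤ (((Ck1 - Ck)/2) * ‖u‖)^2 := by
    rw [hzsq, mul_pow, ← hpnorm]
    nlinarith [hcomb, hCk1pos]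
  have hRnn : 0 ≤ ((Ck1 - Ck)/2) * ‖u‖ := mul_nonneg (by linarith) (norm_nonneg u)
  have hball : ‖z‖ ≤ ((Ck1 - Ck)/2) * ‖u‖ := by
    nlinarith [norm_nonneg z, hball_sq, hRnn]
  intro i
  -- inner product decomposition
  have hdecomp : Ck1 * ⟪u', xbar i⟫
      = ((Ck1 + Ck)/2) * ⟪u, xbar i⟫ + ⟪z, xbar i⟫ := by
    rw [hz, inner_sub_left, real_inner_smul_left, real_inner_smul_left]; ring
  have hCS : |⟪z, xbar i⟫| ≤ ‖z‖ * ‖xbar i‖ := abs_real_inner_le_norm z (xbar i)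
  have hCS' : ‖z‖ * ‖xbar i‖ ≤ ((Ck1 - Ck)/2) * ‖u‖ * ‖xbar i‖ :=
    mul_le_mul_of_nonneg_right hball (norm_nonneg _)
  -- coordinate KKT step
  have kkt : ∀ a : ℝ, 0 ≤ a → a ≤ 1 →
      0 ≤ (a - θk1 i) * (Ck1 * ⟪u', xbar i⟫ - 1) := by
    intro a ha0 ha1
    set θ' : Fin l → ℝ := Function.update θk1 i a with hθ'
    have hbox : ∀ j, 0 ≤ θ' j ∧ θ' j ≤ 1 := by
      intro j
      by_cases hji : j = i
      · subst hji; rw [hθ', Function.update_self]; exact ⟨ha0, ha1⟩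
      · rw [hθ', Function.update_of_ne hji]; exact hθk1B j
    have hC := svm_vi xbar Ck1 hCk1pos θk1 hθk1min θ' hθk1B hbox
    rw [← hu'] at hC
    have hpt : ∀ j, θ' j • xbar j
        = Function.update (fun j => θk1 j • xbar j) i (a • xbar i) j := by
      intro j
      by_cases hji : j = i
      · subst hji; simp [hθ']
      · simp [hθ', Function.update_of_ne hji]
    have split1 : ∑ j, θ' j • xbar j
        = a • xbar i + ∑ j ∈ Finset.univ.erase i, θk1 j • xbar j := by
      rw [Finset.sum_congr rfl (fun j _ => hpt j),
        Finset.sum_update_of_mem (Finset.mem_univ i), Finset.sdiff_singleton_eq_erase]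
    have split2 : u' = θk1 i • xbar i + ∑ j ∈ Finset.univ.erase i, θk1 j • xbar j := by
      rw [hu', ← Finset.add_sum_erase _ (fun j => θk1 j • xbar j) (Finset.mem_univ i)]
    have split3 : (∑ j, θ' j) = a + ∑ j ∈ Finset.univ.erase i, θk1 j := by
      rw [hθ', Finset.sum_update_of_mem (Finset.mem_univ i), Finset.sdiff_singleton_eq_erase]
    have split4 : (∑ j, θk1 j) = θk1 i + ∑ j ∈ Finset.univ.erase i, θk1 j :=
      (Finset.add_sum_erase _ θk1 (Finset.mem_univ i)).symm
    have hdiff : (∑ j, θ' j • xbar j) - u' = (a - θk1 i) • xbar i := by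
      rw [split1, split2, sub_smul]; abel
    rw [hdiff, split3, split4, real_inner_smul_right] at hC
    nlinarith [hC]
  constructor
  · intro h1
    rw [hv] at h1
    have hgt : Ck1 * ⟪u', xbar i⟫ > 1 := by
      rw [hdecomp]
      have := neg_abs_le ⟪z, xbar i⟫
      linarith [hCS, hCS', this]
    have h0 := kkt 0 le_rfl zero_le_one
    have := (hθk1B i).1
    nlinarith [h0, this, hgt]
  · intro h2
    rw [hv] at h2
    have hlt : Ck1 * ⟪u', xbar i⟫ < 1 := by
      rw [hdecomp]
      have := le_abs_self ⟪z, xbar i⟫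
      linarith [hCS, hCS', this]
    have h1 := kkt 1 zero_le_one le_rfl
    have := (hθk1B i).2
    nlinarith [h1, this, hlt]
end

section
/- Let C_{k+1} > C_k > 0, let w_k ∈ ℝ^n minimize the SVM primal objective P_{C_k} over ℝ^n, and let θ^{(k+1)} ∈ [0,1]^l minimize the SVM dual objective g_{C_{k+1}} over [0,1]^l. Then for every index i: (1) if ((C_k + C_{k+1})/(2C_k))·⟨w_k, x̄_i⟩ − ((C_{k+1} − C_k)/(2C_k))·‖w_k‖·‖x̄_i‖ > 1, then θ^{(k+1)}_i = 0; (2) if ((C_k + C_{k+1})/(2C_k))·⟨w_k, x̄_i⟩ + ((C_{k+1} − C_k)/(2C_k))·‖w_k‖·‖x̄_i‖ < 1, then θ^{(k+1)}_i = 1. -/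
open scoped RealInnerProductSpace

lemma svm_dual_kkt {E : Type*} [NormedAddCommGroup E] [InnerProductSpace ℝ E]
    {l : ℕ} (xbar : Fin l → E) (C : ℝ) (hC : 0 < C)
    (θ : Fin l → ℝ) (hB : ∀ i, 0 ≤ θ i ∧ θ i ≤ 1)
    (hmin : ∀ θ' : Fin l → ℝ, (∀ i, 0 ≤ θ' i ∧ θ' i ≤ 1) →
      (C/2) * ‖∑ i, θ i • xbar i‖^2 - ∑ i, θ i
        ≤ (C/2) * ‖∑ i, θ' i • xbar i‖^2 - ∑ i, θ' i)
    (i : Fin l) :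
    (1 < C * ⟪∑ j, θ j • xbar j, xbar i⟫ → θ i = 0) ∧
    (C * ⟪∑ j, θ j • xbar j, xbar i⟫ < 1 → θ i = 1) := by
  set v := ∑ j, θ j • xbar j with hv
  have key : ∀ t : ℝ, 0 ≤ θ i + t → θ i + t ≤ 1 →
      0 ≤ t * (C * ⟪v, xbar i⟫ - 1) + C/2 * t^2 * ‖xbar i‖^2 := by
    intro t ht0 ht1
    set θ' : Fin l → ℝ := fun j => θ j + if j = i then t else 0 with hθ'
    have hfeas : ∀ j, 0 ≤ θ' j ∧ θ' j ≤ 1 := by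
      intro j
      by_cases hj : j = i
      · subst hj; simp [hθ', ht0, ht1]
      · simp [hθ', hj, hB j]
    have hsum : ∑ j, θ' j • xbar j = v + t • xbar i := by
      simp only [hθ', add_smul, Finset.sum_add_distrib, ite_smul, zero_smul]
      rw [Finset.sum_ite_eq' Finset.univ i (fun j => t • xbar j)]
      simp [hv]
    have hsum2 : ∑ j, θ' j = (∑ j, θ j) + t := by
      simp only [hθ', Finset.sum_add_distrib]
      rw [Finset.sum_ite_eq' Finset.univ i (fun _ => t)]
      simp
    have h := hmin θ' hfeas
    rw [hsum, hsum2] at h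
    have hexp : ‖v + t • xbar i‖^2 = ‖v‖^2 + 2 * (t * ⟪v, xbar i⟫) + t^2 * ‖xbar i‖^2 := by
      rw [norm_add_sq_real, real_inner_smul_right, norm_smul]
      ring_nf
      rw [Real.norm_eq_abs, sq_abs]
    rw [hexp] at h
    nlinarith [h]
  constructor
  · intro hd
    by_contra hne
    have hθpos : 0 < θ i := lt_of_le_of_ne (hB i).1 (Ne.symm hne)
    set d := C * ⟪v, xbar i⟫ - 1 with hdd
    have hd0 : 0 < d := by simp [hdd]; linarith
    set s := ‖xbar i‖^2 with hs
    have hs0 : 0 ≤ s := by positivity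
    set m := min (θ i) (d / (C * (s + 1))) with hm
    have hm0 : 0 < m := lt_min hθpos (by positivity)
    have hm1 : m ≤ θ i := min_le_left _ _
    have hm2 : C * (s + 1) * m ≤ d := by
      rw [mul_comm]
      exact (le_div_iff₀ (by positivity)).mp (min_le_right _ _)
    have hk := key (-m) (by linarith) (by linarith [(hB i).2])
    rw [show (-m) * d + C/2 * (-m)^2 * s = -(m*d) + C/2 * m^2 * s by ring] at hk
    nlinarith [mul_le_mul_of_nonneg_left hm2 hm0.le, mul_pos hm0 hd0]
  · intro hd
    by_contra hne
    have hθlt : θ i < 1 := lt_of_le_of_ne (hB i).2 hne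
    set d := C * ⟪v, xbar i⟫ - 1 with hdd
    have hd0 : d < 0 := by simp [hdd]; linarith
    set s := ‖xbar i‖^2 with hs
    have hs0 : 0 ≤ s := by positivity
    set m := min (1 - θ i) (-d / (C * (s + 1))) with hm
    have hm0 : 0 < m := lt_min (by linarith) (div_pos (by linarith) (by positivity))
    have hm1 : m ≤ 1 - θ i := min_le_left _ _
    have hm2 : C * (s + 1) * m ≤ -d := by
      rw [mul_comm]
      exact (le_div_iff₀ (by positivity)).mp (min_le_right _ _)
    have hk := key m (by linarith [(hB i).1]) (by linarith)
    nlinarith [mul_le_mul_of_nonneg_left hm2 hm0.le, mul_pos hm0 (neg_pos.mpr hd0)]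

lemma svm_inner_sum_smul {E : Type*} [NormedAddCommGroup E] [InnerProductSpace ℝ E]
    {l : ℕ} (w : E) (c : Fin l → ℝ) (xs : Fin l → E) :
    ⟪w, ∑ i, c i • xs i⟫ = ∑ i, c i * ⟪w, xs i⟫ := by
  rw [inner_sum]
  exact Finset.sum_congr rfl fun i _ => real_inner_smul_right _ _ _

lemma svm_expand_sum {E : Type*} [NormedAddCommGroup E] [InnerProductSpace ℝ E]
    {l : ℕ} (xbar : Fin l → E) (a : ℝ) (w : E) (c d : Fin l → ℝ) :
    ∑ i, (a * ⟪w, xbar i⟫ - 1) * (c i - d i)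
      = a * ⟪w, ∑ i, c i • xbar i⟫ - a * ⟪w, ∑ i, d i • xbar i⟫
        - ∑ i, c i + ∑ i, d i := by
  rw [svm_inner_sum_smul, svm_inner_sum_smul, Finset.mul_sum, Finset.mul_sum,
    ← Finset.sum_sub_distrib, ← Finset.sum_sub_distrib, ← Finset.sum_add_distrib]
  exact Finset.sum_congr rfl fun i _ => by ring

set_option maxHeartbeats 1000000

/-- DVI$_s$ for SVM, Corollary 11 of the paper: Let `C_{k+1} > C_k > 0`,
let `w_k` minimize the SVM primal `P_{C_k}` over `ℝⁿ`, and let `θk1` minimize the SVM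
dual `g_{C_{k+1}}` over `[0,1]^l`. Then for every index `i`:
(1) `((C_k+C_{k+1})/(2C_k))⟨w_k,x̄ᵢ⟩ - ((C_{k+1}-C_k)/(2C_k))‖w_k‖‖x̄ᵢ‖ > 1` implies
    `θk1ᵢ = 0`;
(2) `((C_k+C_{k+1})/(2C_k))⟨w_k,x̄ᵢ⟩ + ((C_{k+1}-C_k)/(2C_k))‖w_k‖‖x̄ᵢ‖ < 1` implies
    `θk1ᵢ = 1`. -/
theorem dvi_svm_primal (n l : ℕ) (hn : 1 ≤ n) (hl : 1 ≤ l)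
    (x : Fin l → EuclideanSpace ℝ (Fin n)) (y : Fin l → ℝ)
    (hy : ∀ i, y i = 1 ∨ y i = -1)
    (xbar : Fin l → EuclideanSpace ℝ (Fin n)) (hxbar : ∀ i, xbar i = y i • x i)
    (Ck Ck1 : ℝ) (hCk : 0 < Ck) (hCk1 : Ck < Ck1)
    (wk : EuclideanSpace ℝ (Fin n))
    (hwkmin : ∀ w : EuclideanSpace ℝ (Fin n),
      (1/2) * ‖wk‖^2 + Ck * ∑ i, max (1 - ⟪wk, xbar i⟫) 0
        ≤ (1/2) * ‖w‖^2 + Ck * ∑ i, max (1 - ⟪w, xbar i⟫) 0)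
    (θk1 : Fin l → ℝ) (hθk1B : ∀ i, 0 ≤ θk1 i ∧ θk1 i ≤ 1)
    (hθk1min : ∀ θ' : Fin l → ℝ, (∀ i, 0 ≤ θ' i ∧ θ' i ≤ 1) →
      (Ck1/2) * ‖∑ i, θk1 i • xbar i‖^2 - ∑ i, θk1 i
        ≤ (Ck1/2) * ‖∑ i, θ' i • xbar i‖^2 - ∑ i, θ' i) :
    ∀ i : Fin l,
      (((Ck + Ck1)/(2*Ck)) * ⟪wk, xbar i⟫ - ((Ck1 - Ck)/(2*Ck)) * ‖wk‖ * ‖xbar i‖ > 1 →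
        θk1 i = 0) ∧
      (((Ck + Ck1)/(2*Ck)) * ⟪wk, xbar i⟫ + ((Ck1 - Ck)/(2*Ck)) * ‖wk‖ * ‖xbar i‖ < 1 →
        θk1 i = 1) := by
  have hCk1pos : 0 < Ck1 := hCk.trans hCk1
  -- existence of a dual minimizer at Ck
  obtain ⟨θk, hθkB, hθkmin⟩ : ∃ θk : Fin l → ℝ, (∀ i, 0 ≤ θk i ∧ θk i ≤ 1) ∧
      ∀ θ' : Fin l → ℝ, (∀ i, 0 ≤ θ' i ∧ θ' i ≤ 1) →
        (Ck/2) * ‖∑ i, θk i • xbar i‖^2 - ∑ i, θk i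
          ≤ (Ck/2) * ‖∑ i, θ' i • xbar i‖^2 - ∑ i, θ' i := by
    have hset : {θ : Fin l → ℝ | ∀ i, 0 ≤ θ i ∧ θ i ≤ 1}
        = Set.pi Set.univ (fun _ => Set.Icc (0:ℝ) 1) := by
      ext θ
      simp only [Set.mem_setOf_eq, Set.mem_pi, Set.mem_univ, Set.mem_Icc, forall_const]
    have hcomp : IsCompact {θ : Fin l → ℝ | ∀ i, 0 ≤ θ i ∧ θ i ≤ 1} := by
      rw [hset]; exact isCompact_univ_pi (fun _ => isCompact_Icc)
    have hcont : Continuous fun θ : Fin l → ℝ =>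
        (Ck/2) * ‖∑ i, θ i • xbar i‖^2 - ∑ i, θ i := by
      apply Continuous.sub
      · apply Continuous.mul continuous_const
        apply Continuous.pow
        apply Continuous.norm
        exact continuous_finset_sum _ (fun i _ => (continuous_apply i).smul continuous_const)
      · exact continuous_finset_sum _ (fun i _ => continuous_apply i)
    obtain ⟨θk, hmem, hmin⟩ := hcomp.exists_isMinOn
      ⟨fun _ => 0, fun i => by norm_num⟩ hcont.continuousOn
    exact ⟨θk, hmem, fun θ' hθ' => hmin hθ'⟩
  set uk := ∑ i, θk i • xbar i with huk
  set us := ∑ i, θk1 i • xbar i with hus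
  have hKKTk := fun i => svm_dual_kkt xbar Ck hCk θk hθkB hθkmin i
  have hKKT1 := fun i => svm_dual_kkt xbar Ck1 hCk1pos θk1 hθk1B hθk1min i
  -- strong duality: wk = Ck • uk
  have hinneruk : ⟪uk, uk⟫ = ‖uk‖^2 := real_inner_self_eq_norm_sq uk
  have hwkuk : wk = Ck • uk := by
    have hmax : ∀ i, θk i * (1 - ⟪Ck • uk, xbar i⟫) = max (1 - ⟪Ck • uk, xbar i⟫) 0 := by
      intro i
      rw [real_inner_smul_left]
      rcases lt_trichotomy (Ck * ⟪uk, xbar i⟫) 1 with h | h | h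
      · rw [(hKKTk i).2 h, max_eq_left (by linarith)]; ring
      · rw [h]; simp
      · rw [(hKKTk i).1 h, max_eq_right (by linarith)]; ring
    have hPw' : (1/2) * ‖Ck • uk‖^2 + Ck * ∑ i, max (1 - ⟪Ck • uk, xbar i⟫) 0
        = Ck * ∑ i, θk i - Ck^2/2 * ‖uk‖^2 := by
      rw [Finset.sum_congr rfl (fun i _ => (hmax i).symm)]
      have h1 : ∑ i, θk i * (1 - ⟪Ck • uk, xbar i⟫)
          = ∑ i, θk i - Ck * ⟪uk, uk⟫ := by
        have : ∀ i, θk i * (1 - ⟪Ck • uk, xbar i⟫)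
            = θk i - Ck * (θk i * ⟪uk, xbar i⟫) := by
          intro i; rw [real_inner_smul_left]; ring
        rw [Finset.sum_congr rfl (fun i _ => this i), Finset.sum_sub_distrib,
          ← Finset.mul_sum]
        congr 1
        rw [huk, svm_inner_sum_smul]
      rw [h1, norm_smul, Real.norm_eq_abs, abs_of_pos hCk, hinneruk]
      ring
    have hweak : ∀ i, θk i * (1 - ⟪wk, xbar i⟫) ≤ max (1 - ⟪wk, xbar i⟫) 0 := by
      intro i
      rcases le_or_gt 0 (1 - ⟪wk, xbar i⟫) with h | h
      · rw [max_eq_left h]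
        nlinarith [(hθkB i).1, (hθkB i).2]
      · rw [max_eq_right h.le]
        nlinarith [(hθkB i).1]
    have hsumweak : ∑ i, θk i * (1 - ⟪wk, xbar i⟫) ≤ ∑ i, max (1 - ⟪wk, xbar i⟫) 0 :=
      Finset.sum_le_sum (fun i _ => hweak i)
    have hsw : ∑ i, θk i * (1 - ⟪wk, xbar i⟫) = ∑ i, θk i - ⟪wk, uk⟫ := by
      have : ∀ i, θk i * (1 - ⟪wk, xbar i⟫) = θk i - θk i * ⟪wk, xbar i⟫ := fun i => by ring
      rw [Finset.sum_congr rfl (fun i _ => this i), Finset.sum_sub_distrib]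
      congr 1
      rw [huk, svm_inner_sum_smul]
    have hmin := hwkmin (Ck • uk)
    rw [hPw'] at hmin
    have hns : ‖wk - Ck • uk‖^2
        = ‖wk‖^2 - 2 * (Ck * ⟪wk, uk⟫) + Ck^2 * ‖uk‖^2 := by
      rw [norm_sub_sq_real, real_inner_smul_right, norm_smul, Real.norm_eq_abs,
        abs_of_pos hCk]
      ring
    have hfin : ‖wk - Ck • uk‖^2 ≤ 0 := by nlinarith [hsumweak, hsw, hmin]
    have hn0 : ‖wk - Ck • uk‖ = 0 :=
      le_antisymm (by nlinarith [norm_nonneg (wk - Ck • uk)]) (norm_nonneg _)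
    exact sub_eq_zero.mp (norm_eq_zero.mp hn0)
  -- variational inequalities from KKT at both optima
  have hS1 : 0 ≤ ∑ i, (Ck1 * ⟪us, xbar i⟫ - 1) * (θk i - θk1 i) := by
    apply Finset.sum_nonneg
    intro i _
    rcases lt_trichotomy (Ck1 * ⟪us, xbar i⟫) 1 with h | h | h
    · rw [(hKKT1 i).2 h]
      have := (hθkB i).2
      nlinarith
    · rw [h]; simp
    · rw [(hKKT1 i).1 h]
      have := (hθkB i).1
      nlinarith
  have hS2 : 0 ≤ ∑ i, (Ck * ⟪uk, xbar i⟫ - 1) * (θk1 i - θk i) := by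
    apply Finset.sum_nonneg
    intro i _
    rcases lt_trichotomy (Ck * ⟪uk, xbar i⟫) 1 with h | h | h
    · rw [(hKKTk i).2 h]
      have := (hθk1B i).2
      nlinarith
    · rw [h]; simp
    · rw [(hKKTk i).1 h]
      have := (hθk1B i).1
      nlinarith
  rw [svm_expand_sum] at hS1 hS2
  rw [← huk, ← hus] at hS1 hS2
  have hinnerus : ⟪us, us⟫ = ‖us‖^2 := real_inner_self_eq_norm_sq us
  have hcomm : ⟪us, uk⟫ = ⟪uk, us⟫ := real_inner_comm uk us
  have hVI : Ck1 * ‖us‖^2 + Ck * ‖uk‖^2 ≤ (Ck + Ck1) * ⟪uk, us⟫ := by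
    nlinarith [hS1, hS2]
  -- the ball bound
  set p := Ck1 • us - ((Ck + Ck1)/2) • uk with hp
  have hpsq : ‖p‖^2 = Ck1^2 * ‖us‖^2 - Ck1 * (Ck + Ck1) * ⟪uk, us⟫
      + ((Ck + Ck1)/2)^2 * ‖uk‖^2 := by
    rw [hp, norm_sub_sq_real, real_inner_smul_left, real_inner_smul_right,
      norm_smul, norm_smul, Real.norm_eq_abs, Real.norm_eq_abs,
      abs_of_pos hCk1pos, abs_of_pos (by linarith : (0:ℝ) < (Ck + Ck1)/2), hcomm]
    ring
  have hpball : ‖p‖ ≤ (Ck1 - Ck)/2 * ‖uk‖ := by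
    have h2 : ‖p‖^2 ≤ ((Ck1 - Ck)/2 * ‖uk‖)^2 := by
      rw [hpsq]
      nlinarith [mul_le_mul_of_nonneg_left hVI hCk1pos.le]
    have hR : 0 ≤ (Ck1 - Ck)/2 * ‖uk‖ := mul_nonneg (by linarith) (norm_nonneg _)
    nlinarith [norm_nonneg p, h2, hR]
  intro i
  have hwkin : ⟪wk, xbar i⟫ = Ck * ⟪uk, xbar i⟫ := by
    rw [hwkuk, real_inner_smul_left]
  have hwknorm : ‖wk‖ = Ck * ‖uk‖ := by
    rw [hwkuk, norm_smul, Real.norm_eq_abs, abs_of_pos hCk]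
  have hpin : ⟪p, xbar i⟫ = Ck1 * ⟪us, xbar i⟫ - (Ck + Ck1)/2 * ⟪uk, xbar i⟫ := by
    rw [hp, inner_sub_left, real_inner_smul_left, real_inner_smul_left]
  have hCS : |⟪p, xbar i⟫| ≤ ‖p‖ * ‖xbar i‖ := abs_real_inner_le_norm p (xbar i)
  have habs := abs_le.mp hCS
  have hxn : (0:ℝ) ≤ ‖xbar i‖ := norm_nonneg _
  have hb1 : -((Ck1 - Ck)/2 * ‖uk‖ * ‖xbar i‖) ≤ ⟪p, xbar i⟫ := by
    have := mul_le_mul_of_nonneg_right hpball hxn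
    linarith [habs.1]
  have hb2 : ⟪p, xbar i⟫ ≤ (Ck1 - Ck)/2 * ‖uk‖ * ‖xbar i‖ := by
    have := mul_le_mul_of_nonneg_right hpball hxn
    linarith [habs.2]
  constructor
  · intro hhyp
    rw [hwkin, hwknorm] at hhyp
    apply (hKKT1 i).1
    rw [← hus]
    have hsimp : ((Ck + Ck1)/(2*Ck)) * (Ck * ⟪uk, xbar i⟫)
        - ((Ck1 - Ck)/(2*Ck)) * (Ck * ‖uk‖) * ‖xbar i‖
        = (Ck + Ck1)/2 * ⟪uk, xbar i⟫ - (Ck1 - Ck)/2 * ‖uk‖ * ‖xbar i‖ := by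
      field_simp
    rw [hsimp] at hhyp
    linarith [hb1, hpin]
  · intro hhyp
    rw [hwkin, hwknorm] at hhyp
    apply (hKKT1 i).2
    rw [← hus]
    have hsimp : ((Ck + Ck1)/(2*Ck)) * (Ck * ⟪uk, xbar i⟫)
        + ((Ck1 - Ck)/(2*Ck)) * (Ck * ‖uk‖) * ‖xbar i‖
        = (Ck + Ck1)/2 * ⟪uk, xbar i⟫ + (Ck1 - Ck)/2 * ‖uk‖ * ‖xbar i‖ := by
      field_simp
    rw [hsimp] at hhyp
    linarith [hb2, hpin]
end

section
/- Let C_{k+1} > C_k > 0, let θ^{(k)} ∈ [−1,1]^l minimize the LAD dual objective g_{C_k} over [−1,1]^l, and let θ^{(k+1)} ∈ [−1,1]^l minimize g_{C_{k+1}} over [−1,1]^l. Write v = ∑_{j=1}^l θ^{(k)}_j x_j. Then for every index i: (1) if ((C_{k+1} + C_k)/2)·⟨v, x_i⟩ − ((C_{k+1} − C_k)/2)·‖v‖·‖x_i‖ > y_i, then θ^{(k+1)}_i = −1; (2) if ((C_{k+1} + C_k)/2)·⟨v, x_i⟩ + ((C_{k+1} − C_k)/2)·‖v‖·‖x_i‖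 < y_i, then θ^{(k+1)}_i = 1. -/
open scoped RealInnerProductSpace

/-- Variational inequality for a minimizer of the LAD dual over the box. -/
lemma lad_vi {n l : ℕ} (x : Fin l → EuclideanSpace ℝ (Fin n)) (y : Fin l → ℝ)
    (C : ℝ) (θ : Fin l → ℝ) (hB : ∀ i, -1 ≤ θ i ∧ θ i ≤ 1)
    (hmin : ∀ θ' : Fin l → ℝ, (∀ i, -1 ≤ θ' i ∧ θ' i ≤ 1) →
      (C/2) * ‖∑ i, θ i • x i‖^2 - ∑ i, y i * θ i
        ≤ (C/2) * ‖∑ i, θ' i • x i‖^2 - ∑ i, y i * θ' i)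
    (θ' : Fin l → ℝ) (hB' : ∀ i, -1 ≤ θ' i ∧ θ' i ≤ 1) :
    ∑ i, y i * (θ' i - θ i) ≤ C * ⟪∑ i, θ i • x i, ∑ i, (θ' i - θ i) • x i⟫ := by
  set u : EuclideanSpace ℝ (Fin n) := ∑ i, θ i • x i with hu
  set d : EuclideanSpace ℝ (Fin n) := ∑ i, (θ' i - θ i) • x i with hd
  set S : ℝ := ∑ i, y i * (θ' i - θ i) with hS
  set A : ℝ := C * ⟪u, d⟫ - S with hA
  set B : ℝ := (C/2) * ‖d‖^2 with hB2
  have key : ∀ t : ℝ, 0 < t → t ≤ 1 → 0 ≤ t * A + t^2 * B := by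
    intro t ht ht1
    have hfeas : ∀ i, -1 ≤ θ i + t * (θ' i - θ i) ∧ θ i + t * (θ' i - θ i) ≤ 1 := by
      intro i
      obtain ⟨h1, h2⟩ := hB i
      obtain ⟨h3, h4⟩ := hB' i
      constructor <;> nlinarith
    have h := hmin (fun i => θ i + t * (θ' i - θ i)) hfeas
    have hsum : ∑ i, (θ i + t * (θ' i - θ i)) • x i = u + t • d := by
      rw [hu, hd, Finset.smul_sum, ← Finset.sum_add_distrib]
      refine Finset.sum_congr rfl fun i _ => ?_
      rw [add_smul, smul_smul]
    have hysum : ∑ i, y i * (θ i + t * (θ' i - θ i))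
        = (∑ i, y i * θ i) + t * S := by
      rw [hS, Finset.mul_sum, ← Finset.sum_add_distrib]
      refine Finset.sum_congr rfl fun i _ => ?_
      ring
    rw [hsum, hysum] at h
    have hnorm : ‖u + t • d‖^2 = ‖u‖^2 + 2 * (t * ⟪u, d⟫) + t^2 * ‖d‖^2 := by
      rw [norm_add_sq_real, real_inner_smul_right, norm_smul, Real.norm_eq_abs,
        abs_of_pos ht, mul_pow]
    rw [hnorm] at h
    simp only [hA, hB2]
    nlinarith [h]
  by_contra hAneg
  push_neg at hAneg
  have hA0 : A < 0 := by
    simp only [hA] at hAneg ⊢; linarith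
  have hBpos : 0 ≤ B ∨ B < 0 := le_or_gt 0 B
  set t : ℝ := min 1 (-A / (2 * B + 1)) with htdef
  have hB0 : 0 ≤ B := by
    have h1 := key 1 one_pos le_rfl
    nlinarith
  have htpos : 0 < t := by
    apply lt_min one_pos
    apply div_pos (by linarith) (by linarith)
  have ht1 : t ≤ 1 := min_le_left _ _
  have ht2 : t ≤ -A / (2 * B + 1) := min_le_right _ _
  have h := key t htpos ht1
  have h2 : t * (2 * B + 1) ≤ -A := by
    rw [← le_div_iff₀ (by linarith)] at *
    exact ht2
  nlinarith [sq_nonneg t, mul_pos htpos htpos]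

set_option maxHeartbeats 1000000 in
/-- DVI$_s^*$ for LAD, Corollary 13 of the paper: Let
`C_{k+1} > C_k > 0`, let `θk` minimize the LAD dual `g_{C_k}` and `θk1` minimize
`g_{C_{k+1}}` over `[-1,1]^l`, and set `v = ∑ⱼ θkⱼ xⱼ`. Then for every index `i`:
(1) `((C_{k+1}+C_k)/2)⟨v,xᵢ⟩ - ((C_{k+1}-C_k)/2)‖v‖‖xᵢ‖ > yᵢ` implies `θk1ᵢ = -1`;
(2) `((C_{k+1}+C_k)/2)⟨v,xᵢ⟩ + ((C_{k+1}-C_k)/2)‖v‖‖xᵢ‖ < yᵢ` implies `θk1ᵢ = 1`. -/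
theorem dvi_lad_dual (n l : ℕ) (hn : 1 ≤ n) (hl : 1 ≤ l)
    (x : Fin l → EuclideanSpace ℝ (Fin n)) (y : Fin l → ℝ)
    (Ck Ck1 : ℝ) (hCk : 0 < Ck) (hCk1 : Ck < Ck1)
    (θk : Fin l → ℝ) (hθkB : ∀ i, -1 ≤ θk i ∧ θk i ≤ 1)
    (hθkmin : ∀ θ' : Fin l → ℝ, (∀ i, -1 ≤ θ' i ∧ θ' i ≤ 1) →
      (Ck/2) * ‖∑ i, θk i • x i‖^2 - ∑ i, y i * θk i
        ≤ (Ck/2) * ‖∑ i, θ' i • x i‖^2 - ∑ i, y i * θ' i)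
    (θk1 : Fin l → ℝ) (hθk1B : ∀ i, -1 ≤ θk1 i ∧ θk1 i ≤ 1)
    (hθk1min : ∀ θ' : Fin l → ℝ, (∀ i, -1 ≤ θ' i ∧ θ' i ≤ 1) →
      (Ck1/2) * ‖∑ i, θk1 i • x i‖^2 - ∑ i, y i * θk1 i
        ≤ (Ck1/2) * ‖∑ i, θ' i • x i‖^2 - ∑ i, y i * θ' i)
    (v : EuclideanSpace ℝ (Fin n)) (hv : v = ∑ j, θk j • x j) :
    ∀ i : Fin l,
      (((Ck1 + Ck)/2) * ⟪v, x i⟫ - ((Ck1 - Ck)/2) * ‖v‖ * ‖x i‖ > y i →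
        θk1 i = -1) ∧
      (((Ck1 + Ck)/2) * ⟪v, x i⟫ + ((Ck1 - Ck)/2) * ‖v‖ * ‖x i‖ < y i →
        θk1 i = 1) := by
  obtain ⟨w, hw⟩ : ∃ w : EuclideanSpace ℝ (Fin n), w = ∑ j, θk1 j • x j := ⟨_, rfl⟩
  -- VI for θk with θ' = θk1 and for θk1 with θ' = θk
  have vi1 := lad_vi x y Ck θk hθkB hθkmin θk1 hθk1B
  have vi2 := lad_vi x y Ck1 θk1 hθk1B hθk1min θk hθkB
  have hdiff1 : ∑ i, (θk1 i - θk i) • x i = w - v := by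
    rw [hw, hv, ← Finset.sum_sub_distrib]
    exact Finset.sum_congr rfl fun i _ => by rw [sub_smul]
  have hdiff2 : ∑ i, (θk i - θk1 i) • x i = v - w := by
    rw [hw, hv, ← Finset.sum_sub_distrib]
    exact Finset.sum_congr rfl fun i _ => by rw [sub_smul]
  rw [← hv, hdiff1] at vi1
  rw [← hw, hdiff2] at vi2
  have hysum : (∑ i, y i * (θk1 i - θk i)) + (∑ i, y i * (θk i - θk1 i)) = 0 := by
    rw [← Finset.sum_add_distrib]
    exact Finset.sum_eq_zero fun i _ => by ring
  -- combined inequality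
  have comb : 0 ≤ Ck * ⟪v, w - v⟫ + Ck1 * ⟪w, v - w⟫ := by linarith
  have hvw : ⟪v, w - v⟫ = ⟪v, w⟫ - ‖v‖^2 := by
    rw [inner_sub_right, real_inner_self_eq_norm_sq]
  have hwv : ⟪w, v - w⟫ = ⟪v, w⟫ - ‖w‖^2 := by
    rw [inner_sub_right, real_inner_self_eq_norm_sq, real_inner_comm]
  rw [hvw, hwv] at comb
  -- the key norm bound: ‖Ck1•w - ((Ck1+Ck)/2)•v‖ ≤ ((Ck1-Ck)/2)‖v‖
  set z : EuclideanSpace ℝ (Fin n) := Ck1 • w - ((Ck1 + Ck)/2) • v with hz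
  have hznorm2 : ‖z‖^2 ≤ (((Ck1 - Ck)/2) * ‖v‖)^2 := by
    have : ‖z‖^2 = Ck1^2 * ‖w‖^2 - Ck1 * (Ck1 + Ck) * ⟪v, w⟫
        + ((Ck1 + Ck)/2)^2 * ‖v‖^2 := by
      rw [hz, norm_sub_sq_real, real_inner_smul_left, real_inner_smul_right,
        real_inner_comm w v, norm_smul, norm_smul, mul_pow, mul_pow,
        Real.norm_eq_abs, Real.norm_eq_abs, sq_abs, sq_abs]
      ring
    rw [this]
    nlinarith [comb, mul_le_mul_of_nonneg_left comb (le_of_lt (lt_trans hCk hCk1))]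
  have hznorm : ‖z‖ ≤ ((Ck1 - Ck)/2) * ‖v‖ := by
    have h1 : (0:ℝ) ≤ ‖z‖ := norm_nonneg _
    have h2 : (0:ℝ) ≤ ((Ck1 - Ck)/2) * ‖v‖ :=
      mul_nonneg (by linarith) (norm_nonneg _)
    nlinarith
  -- componentwise consequence
  intro i
  have hcomp : ∀ c : ℝ, -1 ≤ c → c ≤ 1 →
      (c - θk1 i) * (Ck1 * ⟪w, x i⟫ - y i) ≥ 0 := by
    intro c hc1 hc2
    have hB' : ∀ j, -1 ≤ Function.update θk1 i c j ∧ Function.update θk1 i c j ≤ 1 := by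
      intro j
      rcases eq_or_ne j i with rfl | hj
      · simp [hc1, hc2]
      · simp [Function.update_of_ne hj]; exact hθk1B j
    have vi := lad_vi x y Ck1 θk1 hθk1B hθk1min (Function.update θk1 i c) hB'
    have hd : ∑ j, (Function.update θk1 i c j - θk1 j) • x j = (c - θk1 i) • x i := by
      rw [Finset.sum_eq_single_of_mem i (Finset.mem_univ i)]
      · simp
      · intro j _ hj
        simp [Function.update_of_ne hj]
    have hy : ∑ j, y j * (Function.update θk1 i c j - θk1 j) = y i * (c - θk1 i) := by
      rw [Finset.sum_eq_single_of_mem i (Finset.mem_univ i)]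
      · simp
      · intro j _ hj
        simp [Function.update_of_ne hj]
    rw [hd, hy, ← hw, real_inner_smul_right] at vi
    nlinarith [vi]
  -- bound on the inner product deviation
  have hinner : |⟪z, x i⟫| ≤ ((Ck1 - Ck)/2) * ‖v‖ * ‖x i‖ := by
    calc |⟪z, x i⟫| ≤ ‖z‖ * ‖x i‖ := abs_real_inner_le_norm z (x i)
    _ ≤ ((Ck1 - Ck)/2) * ‖v‖ * ‖x i‖ := by
        apply mul_le_mul_of_nonneg_right hznorm (norm_nonneg _)
  have hzinner : ⟪z, x i⟫ = Ck1 * ⟪w, x i⟫ - ((Ck1 + Ck)/2) * ⟪v, x i⟫ := by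
    rw [hz, inner_sub_left, real_inner_smul_left, real_inner_smul_left]
  rw [hzinner] at hinner
  rw [abs_le] at hinner
  obtain ⟨hlo, hhi⟩ := hinner
  constructor
  · intro hgt
    have hpos : Ck1 * ⟪w, x i⟫ - y i > 0 := by linarith
    have h := hcomp (-1) le_rfl (by norm_num)
    have hb := hθk1B i
    have h2 : 0 ≤ -1 - θk1 i := (mul_nonneg_iff_of_pos_right hpos).mp h
    exact le_antisymm (by linarith) hb.1
  · intro hlt
    have hneg : Ck1 * ⟪w, x i⟫ - y i < 0 := by linarith
    have h := hcomp 1 (by norm_num) le_rfl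
    have hb := hθk1B i
    have hneg' : 0 < -(Ck1 * ⟪w, x i⟫ - y i) := by linarith
    have h' : 0 ≤ (-(1 - θk1 i)) * (-(Ck1 * ⟪w, x i⟫ - y i)) := by
      rw [neg_mul_neg]; exact h
    have h2 : 0 ≤ -(1 - θk1 i) := (mul_nonneg_iff_of_pos_right hneg').mp h'
    exact le_antisymm hb.2 (by linarith)
end

section
/- Let C_{k+1} > C_k > 0, let w_k ∈ ℝ^n minimize the LAD primal objective P_{C_k} over ℝ^n, and let θ^{(k+1)} ∈ [−1,1]^l minimize the LAD dual objective g_{C_{k+1}} over [−1,1]^l. Then for every index i: (1) if ((C_{k+1} + C_k)/(2C_k))·⟨w_k, x_i⟩ − ((C_{k+1} − C_k)/(2C_k))·‖w_k‖·‖x_i‖ > y_i, then θ^{(k+1)}_i = −1; (2) if ((C_{k+1} + C_k)/(2C_k))·⟨w_k, x_i⟩ + ((C_{k+1} − C_k)/(2C_k))·‖w_k‖·‖x_i‖ < y_i, then θ^{(k+1)}_i = 1. -/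
open scoped RealInnerProductSpace

section Aux
variable {E : Type*} [NormedAddCommGroup E] [InnerProductSpace ℝ E]

lemma lad_loss_convex {l : ℕ} (x : Fin l → E) (y : Fin l → ℝ)
    (u v : E) (t : ℝ) (ht0 : 0 ≤ t) (ht1 : t ≤ 1) :
    ∑ i, |y i - ⟪(1 - t) • u + t • v, x i⟫| ≤
      (1 - t) * ∑ i, |y i - ⟪u, x i⟫| + t * ∑ i, |y i - ⟪v, x i⟫| := by
  rw [Finset.mul_sum, Finset.mul_sum, ← Finset.sum_add_distrib]
  refine Finset.sum_le_sum fun i _ => ?_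
  have h : y i - ⟪(1 - t) • u + t • v, x i⟫
      = (1 - t) * (y i - ⟪u, x i⟫) + t * (y i - ⟪v, x i⟫) := by
    rw [inner_add_left, real_inner_smul_left, real_inner_smul_left]; ring
  rw [h]
  calc |(1-t)*(y i - ⟪u, x i⟫) + t*(y i - ⟪v, x i⟫)|
      ≤ |(1-t)*(y i - ⟪u, x i⟫)| + |t*(y i - ⟪v, x i⟫)| := abs_add_le _ _
    _ = (1-t)*|y i - ⟪u, x i⟫| + t*|y i - ⟪v, x i⟫| := by
        rw [abs_mul, abs_mul, abs_of_nonneg (by linarith : (0:ℝ) ≤ 1 - t),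
          abs_of_nonneg ht0]

lemma limit_aux (A B D : ℝ) (hD : 0 ≤ D) (hAB : A ≤ B)
    (key : ∀ t : ℝ, 0 < t → t ≤ 1 → A + (1/2)*(1-t)*D ≤ B) : A + (1/2)*D ≤ B := by
  by_contra hcon
  push_neg at hcon
  have hDpos : 0 < D := by linarith
  have hεpos : 0 < A + (1/2)*D - B := by linarith
  have ht0 : 0 < min 1 ((A + (1/2)*D - B)/D) := lt_min one_pos (div_pos hεpos hDpos)
  have hk := key _ ht0 (min_le_left _ _)
  have htD : min 1 ((A + (1/2)*D - B)/D) * D ≤ A + (1/2)*D - B := by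
    calc min 1 ((A+(1/2)*D-B)/D) * D ≤ ((A+(1/2)*D-B)/D) * D :=
          mul_le_mul_of_nonneg_right (min_le_right _ _) hDpos.le
      _ = A+(1/2)*D-B := div_mul_cancel₀ _ (ne_of_gt hDpos)
  nlinarith [hk, htD]

lemma strong_min {l : ℕ} (x : Fin l → E) (y : Fin l → ℝ) (C : ℝ) (hC : 0 ≤ C)
    (w0 : E)
    (hmin : ∀ w, (1/2)*‖w0‖^2 + C * ∑ i, |y i - ⟪w0, x i⟫|
        ≤ (1/2)*‖w‖^2 + C * ∑ i, |y i - ⟪w, x i⟫|) (w : E) :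
    (1/2)*‖w0‖^2 + C * ∑ i, |y i - ⟪w0, x i⟫| + (1/2)*‖w - w0‖^2
      ≤ (1/2)*‖w‖^2 + C * ∑ i, |y i - ⟪w, x i⟫| := by
  refine limit_aux _ _ _ (sq_nonneg _) (hmin w) ?_
  intro t ht0 ht1
  have hq : ‖(1-t) • w0 + t • w‖^2
      = (1-t)*‖w0‖^2 + t*‖w‖^2 - t*(1-t)*‖w - w0‖^2 := by
    have e1 : ‖(1-t) • w0 + t • w‖^2
        = (1-t)^2*‖w0‖^2 + 2*((1-t)*(t*⟪w0, w⟫)) + t^2*‖w‖^2 := by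
      rw [norm_add_sq_real, real_inner_smul_left, real_inner_smul_right,
        norm_smul, norm_smul, mul_pow, mul_pow]
      simp only [Real.norm_eq_abs, sq_abs]
      try ring
    have e2 : ‖w - w0‖^2 = ‖w‖^2 - 2*⟪w0, w⟫ + ‖w0‖^2 := by
      rw [norm_sub_sq_real, real_inner_comm]
      try ring
    rw [e1, e2]; ring
  have hf' := mul_le_mul_of_nonneg_left (lad_loss_convex x y w0 w t ht0.le ht1) hC
  have hm := hmin ((1-t) • w0 + t • w)
  rw [hq] at hm
  have hmt := mul_le_mul_of_nonneg_left hm ht0.le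
  have hft := mul_le_mul_of_nonneg_left hf' ht0.le
  have hstep : t * ((1/2)*‖w0‖^2 + C * ∑ i, |y i - ⟪w0, x i⟫| + (1/2)*(1-t)*‖w - w0‖^2)
      ≤ t * ((1/2)*‖w‖^2 + C * ∑ i, |y i - ⟪w, x i⟫|) := by nlinarith [hmt, hft]
  exact le_of_mul_le_mul_left hstep ht0

end Aux

set_option maxHeartbeats 1000000 in
/-- DVI$_s$ for LAD, Corollary 14 of the paper: Let
`C_{k+1} > C_k > 0`, let `w_k` minimize the LAD primal `P_{C_k}` over `ℝⁿ`, and let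
`θk1` minimize the LAD dual `g_{C_{k+1}}` over `[-1,1]^l`. Then for every index `i`:
(1) `((C_{k+1}+C_k)/(2C_k))⟨w_k,xᵢ⟩ - ((C_{k+1}-C_k)/(2C_k))‖w_k‖‖xᵢ‖ > yᵢ` implies
    `θk1ᵢ = -1`;
(2) `((C_{k+1}+C_k)/(2C_k))⟨w_k,xᵢ⟩ + ((C_{k+1}-C_k)/(2C_k))‖w_k‖‖xᵢ‖ < yᵢ` implies
    `θk1ᵢ = 1`. -/
theorem dvi_lad_primal (n l : ℕ) (hn : 1 ≤ n) (hl : 1 ≤ l)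
    (x : Fin l → EuclideanSpace ℝ (Fin n)) (y : Fin l → ℝ)
    (Ck Ck1 : ℝ) (hCk : 0 < Ck) (hCk1 : Ck < Ck1)
    (wk : EuclideanSpace ℝ (Fin n))
    (hwkmin : ∀ w : EuclideanSpace ℝ (Fin n),
      (1/2) * ‖wk‖^2 + Ck * ∑ i, |y i - ⟪wk, x i⟫|
        ≤ (1/2) * ‖w‖^2 + Ck * ∑ i, |y i - ⟪w, x i⟫|)
    (θk1 : Fin l → ℝ) (hθk1B : ∀ i, -1 ≤ θk1 i ∧ θk1 i ≤ 1)
    (hθk1min : ∀ θ' : Fin l → ℝ, (∀ i, -1 ≤ θ' i ∧ θ' i ≤ 1) →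
      (Ck1/2) * ‖∑ i, θk1 i • x i‖^2 - ∑ i, y i * θk1 i
        ≤ (Ck1/2) * ‖∑ i, θ' i • x i‖^2 - ∑ i, y i * θ' i) :
    ∀ i : Fin l,
      (((Ck1 + Ck)/(2*Ck)) * ⟪wk, x i⟫ - ((Ck1 - Ck)/(2*Ck)) * ‖wk‖ * ‖x i‖ > y i →
        θk1 i = -1) ∧
      (((Ck1 + Ck)/(2*Ck)) * ⟪wk, x i⟫ + ((Ck1 - Ck)/(2*Ck)) * ‖wk‖ * ‖x i‖ < y i →
        θk1 i = 1) := by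
  classical
  have hCk1pos : 0 < Ck1 := lt_trans hCk hCk1
  obtain ⟨S, hS⟩ : ∃ S : EuclideanSpace ℝ (Fin n), S = ∑ i, θk1 i • x i := ⟨_, rfl⟩
  rw [← hS] at hθk1min
  obtain ⟨w1, hw1⟩ : ∃ w1 : EuclideanSpace ℝ (Fin n), w1 = Ck1 • S := ⟨_, rfl⟩
  have hw1inner : ∀ i, ⟪w1, x i⟫ = Ck1 * ⟪S, x i⟫ := fun i => by
    rw [hw1]; exact real_inner_smul_left _ _ _
  -- key inequality from dual optimality
  have keyineq : ∀ (i : Fin l) (s : ℝ), -1 ≤ θk1 i + s → θk1 i + s ≤ 1 →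
      0 ≤ s * (⟪w1, x i⟫ - y i) + (Ck1/2) * s^2 * ‖x i‖^2 := by
    intro i s hs1 hs2
    set θ' : Fin l → ℝ := Function.update θk1 i (θk1 i + s) with hθ'
    have hbox : ∀ j, -1 ≤ θ' j ∧ θ' j ≤ 1 := by
      intro j
      by_cases hj : j = i
      · subst hj; rw [hθ']; simp only [Function.update_self]; exact ⟨hs1, hs2⟩
      · rw [hθ', Function.update_of_ne hj]; exact hθk1B j
    have hsum : ∑ j, θ' j • x j = S + s • x i := by
      have h1 : ∀ j : Fin l, θ' j • x j = θk1 j • x j + (if j = i then s • x i else 0) := by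
        intro j
        by_cases hj : j = i
        · subst hj; rw [hθ']; simp [Function.update_self, add_smul]
        · rw [hθ', Function.update_of_ne hj, if_neg hj, add_zero]
      rw [Finset.sum_congr rfl fun j _ => h1 j, Finset.sum_add_distrib]
      simp [hS]
    have hysum : ∑ j, y j * θ' j = (∑ j, y j * θk1 j) + y i * s := by
      have h1 : ∀ j : Fin l, y j * θ' j = y j * θk1 j + (if j = i then y i * s else 0) := by
        intro j
        by_cases hj : j = i
        · subst hj; rw [hθ']; simp [Function.update_self, mul_add]
        · rw [hθ', Function.update_of_ne hj, if_neg hj, add_zero]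
      rw [Finset.sum_congr rfl fun j _ => h1 j, Finset.sum_add_distrib]
      simp
    have hnorm : ‖S + s • x i‖^2 = ‖S‖^2 + 2*(s*⟪S, x i⟫) + s^2*‖x i‖^2 := by
      rw [norm_add_sq_real, real_inner_smul_right, norm_smul, mul_pow]
      simp only [Real.norm_eq_abs, sq_abs]
    have hm := hθk1min θ' hbox
    rw [hsum, hysum, hnorm] at hm
    rw [hw1inner]
    nlinarith [hm]
  -- KKT sign conditions
  have kkt1 : ∀ i, 0 < ⟪w1, x i⟫ - y i → θk1 i = -1 := by
    intro i hd
    by_contra hne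
    have hgt : -1 < θk1 i := lt_of_le_of_ne (hθk1B i).1 (Ne.symm hne)
    obtain ⟨d, hdd⟩ : ∃ d : ℝ, d = ⟪w1, x i⟫ - y i := ⟨_, rfl⟩
    obtain ⟨K, hK⟩ : ∃ K : ℝ, K = (Ck1/2) * ‖x i‖^2 := ⟨_, rfl⟩
    have hK0 : 0 ≤ K := by rw [hK]; positivity
    have hd' : 0 < d := hdd ▸ hd
    obtain ⟨ε, hε⟩ : ∃ ε : ℝ, ε = min (1 + θk1 i) (d/(2*K+1)) := ⟨_, rfl⟩
    have hε0 : 0 < ε := hε ▸ lt_min (by linarith) (div_pos hd' (by linarith))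
    have hε1 : ε ≤ 1 + θk1 i := hε ▸ min_le_left _ _
    have hε2 : ε * (2*K+1) ≤ d := by
      rw [hε]
      calc min (1 + θk1 i) (d/(2*K+1)) * (2*K+1)
          ≤ (d/(2*K+1)) * (2*K+1) :=
            mul_le_mul_of_nonneg_right (min_le_right _ _) (by linarith)
        _ = d := div_mul_cancel₀ _ (ne_of_gt (by linarith : (0:ℝ) < 2*K+1))
    have h := keyineq i (-ε) (by linarith) (by linarith [(hθk1B i).2])
    have h' : 0 ≤ -(ε*d) + K*ε^2 := by
      rw [hdd, hK]; nlinarith [h]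
    have hε2ε := mul_le_mul_of_nonneg_left hε2 hε0.le
    have hKε : 0 ≤ K*(ε*ε) := mul_nonneg hK0 (mul_pos hε0 hε0).le
    nlinarith [h', hε2ε, hKε, mul_pos hε0 hε0]
  have kkt2 : ∀ i, ⟪w1, x i⟫ - y i < 0 → θk1 i = 1 := by
    intro i hd
    by_contra hne
    have hlt : θk1 i < 1 := lt_of_le_of_ne (hθk1B i).2 hne
    obtain ⟨d, hdd⟩ : ∃ d : ℝ, d = ⟪w1, x i⟫ - y i := ⟨_, rfl⟩
    obtain ⟨K, hK⟩ : ∃ K : ℝ, K = (Ck1/2) * ‖x i‖^2 := ⟨_, rfl⟩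
    have hK0 : 0 ≤ K := by rw [hK]; positivity
    have hd' : d < 0 := hdd ▸ hd
    obtain ⟨ε, hε⟩ : ∃ ε : ℝ, ε = min (1 - θk1 i) ((-d)/(2*K+1)) := ⟨_, rfl⟩
    have hε0 : 0 < ε := hε ▸ lt_min (by linarith) (div_pos (by linarith) (by linarith))
    have hε1 : ε ≤ 1 - θk1 i := hε ▸ min_le_left _ _
    have hε2 : ε * (2*K+1) ≤ -d := by
      rw [hε]
      calc min (1 - θk1 i) ((-d)/(2*K+1)) * (2*K+1)
          ≤ ((-d)/(2*K+1)) * (2*K+1) :=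
            mul_le_mul_of_nonneg_right (min_le_right _ _) (by linarith)
        _ = -d := div_mul_cancel₀ _ (ne_of_gt (by linarith : (0:ℝ) < 2*K+1))
    have h := keyineq i ε (by linarith [(hθk1B i).1]) (by linarith)
    have h' : 0 ≤ ε*d + K*ε^2 := by
      rw [hdd, hK]; nlinarith [h]
    have hε2ε := mul_le_mul_of_nonneg_left hε2 hε0.le
    have hKε : 0 ≤ K*(ε*ε) := mul_nonneg hK0 (mul_pos hε0 hε0).le
    nlinarith [h', hε2ε, hKε, mul_pos hε0 hε0]
  -- complementary slackness
  have slack : ∀ i, |y i - ⟪w1, x i⟫| = θk1 i * (y i - ⟪w1, x i⟫) := by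
    intro i
    rcases lt_trichotomy (y i - ⟪w1, x i⟫) 0 with h | h | h
    · rw [kkt1 i (by linarith), abs_of_neg h]; ring
    · rw [h, abs_zero, mul_zero]
    · rw [kkt2 i (by linarith), abs_of_pos h, one_mul]
  -- inner products with w1
  have hinnerS : ∀ w : EuclideanSpace ℝ (Fin n),
      ⟪w, w1⟫ = Ck1 * ∑ j, θk1 j * ⟪w, x j⟫ := by
    intro w
    rw [hw1, real_inner_smul_right, hS, inner_sum]
    congr 1
    exact Finset.sum_congr rfl fun j _ => real_inner_smul_right _ _ _
  have hw1normsq : ⟪w1, w1⟫ = ‖w1‖^2 := real_inner_self_eq_norm_sq w1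
  -- w1 minimizes the primal P_{Ck1}
  have hw1min : ∀ w : EuclideanSpace ℝ (Fin n),
      (1/2)*‖w1‖^2 + Ck1 * ∑ i, |y i - ⟪w1, x i⟫|
        ≤ (1/2)*‖w‖^2 + Ck1 * ∑ i, |y i - ⟪w, x i⟫| := by
    intro w
    have h1 : ∑ i, θk1 i * (y i - ⟪w, x i⟫) ≤ ∑ i, |y i - ⟪w, x i⟫| := by
      refine Finset.sum_le_sum fun i _ => ?_
      calc θk1 i * (y i - ⟪w, x i⟫) ≤ |θk1 i * (y i - ⟪w, x i⟫)| := le_abs_self _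
        _ = |θk1 i| * |y i - ⟪w, x i⟫| := abs_mul _ _
        _ ≤ 1 * |y i - ⟪w, x i⟫| :=
            mul_le_mul_of_nonneg_right (abs_le.mpr ⟨(hθk1B i).1, (hθk1B i).2⟩) (abs_nonneg _)
        _ = |y i - ⟪w, x i⟫| := one_mul _
    have hA := mul_le_mul_of_nonneg_left h1 hCk1pos.le
    have hsplit : ∀ w' : EuclideanSpace ℝ (Fin n),
        Ck1 * ∑ i, θk1 i * (y i - ⟪w', x i⟫)
          = Ck1 * (∑ i, θk1 i * y i) - ⟪w', w1⟫ := by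
      intro w'
      rw [hinnerS w', ← mul_sub]
      congr 1
      rw [← Finset.sum_sub_distrib]
      exact Finset.sum_congr rfl fun i _ => by ring
    have e1 := hsplit w
    have e2 : Ck1 * ∑ i, |y i - ⟪w1, x i⟫| = Ck1 * (∑ i, θk1 i * y i) - ‖w1‖^2 := by
      rw [Finset.sum_congr rfl fun i _ => slack i, hsplit w1, hw1normsq]
    have h4 : (0:ℝ) ≤ ‖w - w1‖^2 := sq_nonneg _
    have h5 : ‖w - w1‖^2 = ‖w‖^2 - 2*⟪w, w1⟫ + ‖w1‖^2 := norm_sub_sq_real w w1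
    linarith
  -- ball bound
  have sm1 := strong_min x y Ck hCk.le wk hwkmin w1
  have sm2 := strong_min x y Ck1 hCk1pos.le w1 hw1min wk
  have hip : ‖w1 - wk‖^2 = ‖w1‖^2 - 2*⟪w1, wk⟫ + ‖wk‖^2 := norm_sub_sq_real w1 wk
  have hip2 : ‖wk - w1‖^2 = ‖w1‖^2 - 2*⟪w1, wk⟫ + ‖wk‖^2 := by
    rw [norm_sub_rev]; exact hip
  rw [hip] at sm1
  rw [hip2] at sm2
  have sm1' := mul_le_mul_of_nonneg_left sm1 hCk1pos.le
  have sm2' := mul_le_mul_of_nonneg_left sm2 hCk.le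
  have hkey : Ck*‖w1‖^2 - (Ck1+Ck)*⟪w1,wk⟫ + Ck1*‖wk‖^2 ≤ 0 := by
    nlinarith [sm1', sm2']
  have hball2 : ‖w1 - ((Ck1+Ck)/(2*Ck)) • wk‖^2 ≤ (((Ck1-Ck)/(2*Ck)) * ‖wk‖)^2 := by
    have he : ‖w1 - ((Ck1+Ck)/(2*Ck)) • wk‖^2
        = ‖w1‖^2 - 2*(((Ck1+Ck)/(2*Ck))*⟪w1,wk⟫) + ((Ck1+Ck)/(2*Ck))^2*‖wk‖^2 := by
      rw [norm_sub_sq_real, real_inner_smul_right, norm_smul, mul_pow]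
      simp only [Real.norm_eq_abs, sq_abs]
    have h4 : (0:ℝ) < 4*Ck^2 := by positivity
    have goal' : 4*Ck^2*‖w1‖^2 - 4*Ck*(Ck1+Ck)*⟪w1,wk⟫ + (Ck1+Ck)^2*‖wk‖^2
        ≤ (Ck1-Ck)^2*‖wk‖^2 := by
      nlinarith [mul_le_mul_of_nonneg_left hkey (by linarith : (0:ℝ) ≤ 4*Ck)]
    rw [he,
      show ‖w1‖^2 - 2*(((Ck1+Ck)/(2*Ck))*⟪w1,wk⟫) + ((Ck1+Ck)/(2*Ck))^2*‖wk‖^2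
        = (4*Ck^2*‖w1‖^2 - 4*Ck*(Ck1+Ck)*⟪w1,wk⟫ + (Ck1+Ck)^2*‖wk‖^2)/(4*Ck^2) by
          field_simp; ring,
      show (((Ck1-Ck)/(2*Ck)) * ‖wk‖)^2 = ((Ck1-Ck)^2*‖wk‖^2)/(4*Ck^2) by
          field_simp; ring]
    exact (div_le_div_iff_of_pos_right h4).mpr goal'
  have hb0 : 0 ≤ ((Ck1-Ck)/(2*Ck)) * ‖wk‖ :=
    mul_nonneg (div_nonneg (by linarith) (by linarith)) (norm_nonneg _)
  have hball : ‖w1 - ((Ck1+Ck)/(2*Ck)) • wk‖ ≤ ((Ck1-Ck)/(2*Ck)) * ‖wk‖ := by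
    nlinarith [hball2, norm_nonneg (w1 - ((Ck1+Ck)/(2*Ck)) • wk), hb0]
  intro i
  have hCS : |⟪w1 - ((Ck1+Ck)/(2*Ck)) • wk, x i⟫| ≤ (((Ck1-Ck)/(2*Ck)) * ‖wk‖) * ‖x i‖ :=
    le_trans (abs_real_inner_le_norm _ _) (mul_le_mul_of_nonneg_right hball (norm_nonneg _))
  have hdecomp : ⟪w1, x i⟫
      = ((Ck1+Ck)/(2*Ck)) * ⟪wk, x i⟫ + ⟪w1 - ((Ck1+Ck)/(2*Ck)) • wk, x i⟫ := by
    rw [inner_sub_left, real_inner_smul_left]; ring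
  have habs := abs_le.mp hCS
  constructor
  · intro hc
    exact kkt1 i (by linarith [habs.1, hdecomp])
  · intro hc
    exact kkt2 i (by linarith [habs.2, hdecomp])
end

section
/- Let u, v, o ∈ ℝ^n with u ≠ 0, let d ∈ ℝ, r > 0, set d' = d − ⟨u, o⟩, and let K = {w ∈ ℝ^n : ⟨u, w⟩ ≤ d and ‖w − o‖ ≤ r}. Assume d' ≥ −r‖u‖ (so K is nonempty). Define v^⊥ = v − (⟨v, u⟩/‖u‖²)·u. If ⟨v, u⟩ + ‖v‖·d'/r < 0, then the minimum of ⟨v, w⟩ over w ∈ K equals ⟨v, o⟩ − ‖v^⊥‖·√(r² − d'²/‖u‖²) + ⟨v, u⟩·d'/‖u‖²; that is, this value is the greatest lower bound of {⟨v, w⟩ : w ∈ K} and is attained. -/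
open scoped RealInnerProductSpace

private lemma key2 (a b L r s p : ℝ) (hb : 0 ≤ b) (hL : 0 ≤ L)
    (hL2 : L^2 = a^2 + b^2) (hr : 0 < r) (hp : 0 ≤ p) (hp2 : p^2 = r^2 - s^2)
    (hcond : L * s ≤ -(a * r)) : a * p + b * s ≤ 0 := by
  rcases le_or_gt a 0 with ha | ha
  · rcases le_or_gt s 0 with hs | hs
    · nlinarith [mul_nonneg hb (neg_nonneg.mpr hs), mul_nonneg (neg_nonneg.mpr ha) hp]
    · have h0 : 0 ≤ L * s := mul_nonneg hL hs.le
      have h1 : (L*s)^2 ≤ (a*r)^2 := by nlinarith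
      nlinarith [mul_nonneg hb hs.le, mul_nonneg (neg_nonneg.mpr ha) hp,
        sq_nonneg (b*s + a*p)]
  · have hLpos : 0 < L := by nlinarith
    have hs : s < 0 := by nlinarith
    have har : a*r ≤ -(L*s) := by linarith
    have h1 : (a*r)^2 ≤ (L*s)^2 := by
      nlinarith [pow_le_pow_left₀ (by positivity : (0:ℝ) ≤ a*r) har 2]
    nlinarith [mul_nonneg ha.le hp, mul_nonneg hb (neg_nonneg.mpr hs.le),
      sq_nonneg (a*p + b*s)]

private lemma key1 (a b L r s δ p q : ℝ) (hb : 0 ≤ b) (hL : 0 ≤ L)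
    (hL2 : L^2 = a^2 + b^2) (hr : 0 < r) (hp : 0 ≤ p) (hp2 : p^2 = r^2 - s^2)
    (hq : 0 ≤ q) (hq2 : q^2 = r^2 - δ^2) (hs : s ≤ δ)
    (hcond : a*r + L*δ < 0) : a*δ - b*q ≤ a*s - b*p := by
  have hLpos : 0 < L := by
    rcases hL.lt_or_eq with h | h
    · exact h
    · exfalso
      have ha : a = 0 := by nlinarith
      rw [ha, ← h] at hcond
      simp at hcond
  have haL : -a ≤ L := by nlinarith [sq_nonneg (L + a)]
  have h2 : a*q + b*δ ≤ 0 := key2 a b L r δ q hb hL hL2 hr hq hq2 (by nlinarith)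
  have h1 : a*p + b*s ≤ 0 := key2 a b L r s p hb hL hL2 hr hp hp2 (by nlinarith)
  rcases eq_or_lt_of_le hs with h | h
  · subst h
    have : p = q := by nlinarith [sq_nonneg (p - q)]
    rw [this]
  · have hδr : δ < r := by nlinarith
    have hsr : -r ≤ s := by nlinarith
    have hqpos : 0 < q := by nlinarith
    have hpq : 0 < p + q := by linarith
    nlinarith [mul_nonneg (sub_nonneg.mpr h.le) (by linarith : (0:ℝ) ≤ -(a*p+b*s) + -(a*q+b*δ))]

private lemma sdiv1 (x n : ℝ) (hn : n ≠ 0) : x / n^2 * n^2 = x := by field_simp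
private lemma sdiv3 (x y n : ℝ) (hn : n ≠ 0) : x * y / n^2 = (x/n) * (y/n) := by
  rw [div_mul_div_comm, ← sq]
private lemma sdiv2 (x y n : ℝ) (hn : n ≠ 0) : x / n^2 * y = (x/n) * (y/n) := by
  rw [div_mul_eq_mul_div, div_mul_div_comm, ← sq]
private lemma sdiv4 (x L y r n : ℝ) (hn : n ≠ 0) (hr : r ≠ 0) :
    (x/n)*r + L*(y/n) = (x + L*y/r)*(r/n) := by field_simp
private lemma aux1 (x nu nz r : ℝ) (h : |x| ≤ nu * nz) (hz : nz ≤ r)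
    (hnu : 0 ≤ nu) (hz0 : 0 ≤ nz) : x^2 ≤ r^2 * nu^2 := by
  have h2 : x^2 ≤ (nu*nz)^2 := by
    nlinarith [abs_nonneg x, sq_abs x, le_abs_self x, neg_abs_le x]
  have h3 : nz^2 ≤ r^2 := by nlinarith
  have h4 := mul_le_mul_of_nonneg_left h3 (sq_nonneg nu)
  nlinarith [h2]
private lemma aux2 (x y : ℝ) (hx : 0 ≤ x) (hy : 0 ≤ y) (h : x^2 ≤ y^2) : x ≤ y := by
  nlinarith
private lemma sdiv5 (x n : ℝ) (hn : n ≠ 0) : (x/n^2)^2 * n^2 = x^2/n^2 := by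
  field_simp

set_option maxHeartbeats 1000000 in
/-- Lemma 17, case 2, of the paper: Minimizing a linear function
`⟨v, ·⟩` over `K = {w : ⟨u,w⟩ ≤ d, ‖w - o‖ ≤ r}` with `u ≠ 0` and
`d' = d - ⟨u,o⟩ ≥ -r‖u‖`: if `⟨v,u⟩ + ‖v‖d'/r < 0`, the minimum is
`⟨v,o⟩ - ‖v^⊥‖√(r² - d'²/‖u‖²) + ⟨v,u⟩d'/‖u‖²` (attained), where
`v^⊥ = v - (⟨v,u⟩/‖u‖²)u`. -/
theorem min_linear_over_dome_case2 (n : ℕ)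
    (u v o : EuclideanSpace ℝ (Fin n)) (hu : u ≠ 0) (d r : ℝ) (hr : 0 < r)
    (hfeas : d - ⟪u, o⟫ ≥ -(r * ‖u‖))
    (hcond : ⟪v, u⟫ + ‖v‖ * (d - ⟪u, o⟫) / r < 0) :
    IsLeast {t : ℝ | ∃ w : EuclideanSpace ℝ (Fin n),
        ⟪u, w⟫ ≤ d ∧ ‖w - o‖ ≤ r ∧ t = ⟪v, w⟫}
      (⟪v, o⟫ - ‖v - (⟪v, u⟫ / ‖u‖^2) • u‖ * Real.sqrt (r^2 - (d - ⟪u, o⟫)^2 / ‖u‖^2)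
        + ⟪v, u⟫ * (d - ⟪u, o⟫) / ‖u‖^2) := by
  have hnu : (0:ℝ) < ‖u‖ := norm_pos_iff.mpr hu
  have hnu2 : (0:ℝ) < ‖u‖^2 := by positivity
  have hnu' : ‖u‖ ≠ 0 := ne_of_gt hnu
  set c : ℝ := ⟪v, u⟫ / ‖u‖^2 with hc
  set vp := v - c • u with hvp
  have hvpu : ⟪vp, u⟫ = 0 := by
    rw [hvp, inner_sub_left, real_inner_smul_left, real_inner_self_eq_norm_sq, hc,
      sdiv1 _ _ hnu', sub_self]
  have hupv : ⟪u, vp⟫ = 0 := by rw [real_inner_comm]; exact hvpu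
  have hvdecomp : v = vp + c • u := by rw [hvp]; abel
  have hvvp : ⟪v, vp⟫ = ‖vp‖^2 := by
    conv_lhs => rw [hvdecomp]
    rw [inner_add_left, real_inner_smul_left, hupv, real_inner_self_eq_norm_sq]
    ring
  have hL2 : ‖v‖^2 = (⟪v, u⟫/‖u‖)^2 + ‖vp‖^2 := by
    have h5 : c^2 * ‖u‖^2 = ⟪v, u⟫^2/‖u‖^2 := by rw [hc]; exact sdiv5 _ _ hnu'
    conv_lhs => rw [hvdecomp]
    rw [norm_add_sq_real, real_inner_smul_right, hvpu, norm_smul, mul_pow,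
      Real.norm_eq_abs, sq_abs, h5, div_pow]
    ring
  have hvpos : (0:ℝ) < ‖v‖ := by
    rcases (norm_nonneg v).lt_or_eq with h | h
    · exact h
    · exfalso
      have hv0 : v = 0 := by rwa [eq_comm, norm_eq_zero] at h
      rw [hv0] at hcond
      simp at hcond
  have hCSvu : -(‖v‖ * ‖u‖) ≤ ⟪v, u⟫ := by
    have h1 := abs_real_inner_le_norm v u
    have h2 := neg_abs_le ⟪v, u⟫
    linarith
  set D := d - ⟪u, o⟫ with hD
  have hDlt : D < r * ‖u‖ := by
    have h1 : ‖v‖ * D / r < ‖v‖ * ‖u‖ := by linarith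
    rw [div_lt_iff₀ hr] at h1
    have h2 : ‖v‖ * D < ‖v‖ * (r * ‖u‖) := by nlinarith
    exact (mul_lt_mul_iff_right₀ hvpos).mp h2
  have hDge : -(r * ‖u‖) ≤ D := hfeas
  have hargnn : 0 ≤ r^2 - D^2 / ‖u‖^2 := by
    have h2 : D^2 / ‖u‖^2 ≤ r^2 := by rw [div_le_iff₀ hnu2]; nlinarith
    linarith
  set ρ := Real.sqrt (r^2 - D^2 / ‖u‖^2) with hρ
  have hρnn : 0 ≤ ρ := Real.sqrt_nonneg _
  have hρ2 : ρ^2 = r^2 - D^2 / ‖u‖^2 := Real.sq_sqrt hargnn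
  set a : ℝ := ⟪v, u⟫ / ‖u‖ with ha
  set δ : ℝ := D / ‖u‖ with hδ
  have hδ2 : δ^2 = D^2 / ‖u‖^2 := by rw [hδ, div_pow]
  have haδ : ⟪v, u⟫ * D / ‖u‖^2 = a * δ := by
    rw [ha, hδ]; exact sdiv3 _ _ _ hnu'
  have hcond' : a * r + ‖v‖ * δ < 0 := by
    rw [ha, hδ, sdiv4 _ _ _ _ _ hnu' (ne_of_gt hr)]
    exact mul_neg_of_neg_of_pos hcond (by positivity)
  constructor
  · -- membership
    set e : ℝ := if ‖vp‖ = 0 then 0 else ρ / ‖vp‖ with he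
    have he1 : e * ‖vp‖^2 = ρ * ‖vp‖ := by
      by_cases h : ‖vp‖ = 0
      · simp [he, h]
      · rw [he, if_neg h]; field_simp
    have he2 : e^2 * ‖vp‖^2 ≤ ρ^2 := by
      by_cases h : ‖vp‖ = 0
      · simp [he, h]; positivity
      · rw [he, if_neg h]; rw [div_pow]; rw [div_mul_cancel₀]
        · positivity
    refine ⟨o + ((D/‖u‖^2) • u - e • vp), ?_, ?_, ?_⟩
    · rw [inner_add_right, inner_sub_right, real_inner_smul_right, real_inner_smul_right,
        real_inner_self_eq_norm_sq, hupv, sdiv1 _ _ hnu']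
      rw [hD]; ring_nf; linarith [hD]
    · have hwo : o + ((D/‖u‖^2) • u - e • vp) - o = (D/‖u‖^2) • u - e • vp := by abel
      rw [hwo]
      have hn2 : ‖(D/‖u‖^2) • u - e • vp‖^2 = D^2/‖u‖^2 + e^2 * ‖vp‖^2 := by
        rw [norm_sub_sq_real, real_inner_smul_left, real_inner_smul_right, hupv,
          norm_smul, norm_smul, mul_pow, mul_pow, Real.norm_eq_abs, Real.norm_eq_abs,
          sq_abs, sq_abs, sdiv5 _ _ hnu']
        ring
      refine aux2 _ _ (norm_nonneg _) hr.le ?_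
      rw [hn2]
      have h3 : D^2 / ‖u‖^2 + ρ^2 = r^2 := by rw [hρ2]; ring
      linarith
    · rw [inner_add_right, inner_sub_right, real_inner_smul_right, real_inner_smul_right,
        hvvp, he1]
      ring
  · -- lower bound
    rintro t ⟨w, hw1, hw2, rfl⟩
    have huz : ⟪u, w - o⟫ = ⟪u, w⟫ - ⟪u, o⟫ := inner_sub_right u w o
    have hvzw : ⟪v, w - o⟫ = ⟪v, w⟫ - ⟪v, o⟫ := inner_sub_right v w o
    set z := w - o with hz
    set iz : ℝ := ⟪u, z⟫ with hiz
    have hizD : iz ≤ D := by rw [huz, hD]; linarith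
    set s : ℝ := iz / ‖u‖ with hs
    have hsδ : s ≤ δ := by rw [hs, hδ]; gcongr
    have hCSuz : |iz| ≤ ‖u‖ * ‖z‖ := by rw [hiz]; exact abs_real_inner_le_norm u z
    have hsr2 : s^2 ≤ r^2 := by
      have h1 : iz^2 ≤ r^2 * ‖u‖^2 := aux1 iz ‖u‖ ‖z‖ r hCSuz hw2 (norm_nonneg u) (norm_nonneg z)
      rw [hs, div_pow, div_le_iff₀ hnu2]
      linarith
    set p := Real.sqrt (r^2 - s^2) with hp
    have hpnn : 0 ≤ p := Real.sqrt_nonneg _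
    have hp2 : p^2 = r^2 - s^2 := Real.sq_sqrt (by linarith)
    set zp := z - (iz/‖u‖^2) • u with hzp
    have hzp2 : ‖zp‖^2 = ‖z‖^2 - s^2 := by
      rw [hzp, norm_sub_sq_real, real_inner_smul_right, real_inner_comm u z, ← hiz,
        norm_smul, mul_pow, Real.norm_eq_abs, sq_abs, sdiv5 _ _ hnu', hs, div_pow]
      rw [sdiv2 _ _ _ hnu']
      ring
    have hzple : ‖zp‖ ≤ p := by
      refine aux2 _ _ (norm_nonneg zp) hpnn ?_
      rw [hzp2, hp2]
      have h1 := pow_le_pow_left₀ (norm_nonneg z) hw2 2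
      linarith
    have hvpz : ⟪vp, zp⟫ = ⟪vp, z⟫ := by
      rw [hzp, inner_sub_right, real_inner_smul_right, hvpu]
      ring
    have hcs : c * iz = a * s := by rw [hc, ha, hs]; exact sdiv2 _ _ _ hnu'
    have hvz2 : ⟪v, z⟫ = ⟪vp, zp⟫ + a * s := by
      conv_lhs => rw [hvdecomp]
      rw [inner_add_left, real_inner_smul_left, ← hiz, hvpz, hcs]
    have hCS2 : -(‖vp‖ * ‖zp‖) ≤ ⟪vp, zp⟫ := by
      have h1 := abs_real_inner_le_norm vp zp
      have h2 := neg_abs_le ⟪vp, zp⟫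
      linarith
    have hmul : ‖vp‖ * ‖zp‖ ≤ ‖vp‖ * p := mul_le_mul_of_nonneg_left hzple (norm_nonneg vp)
    have hk := key1 a ‖vp‖ ‖v‖ r s δ p ρ (norm_nonneg vp) (norm_nonneg v) hL2 hr
      hpnn hp2 hρnn (by rw [hρ2, hδ2]) hsδ hcond'
    rw [haδ]
    linarith [hvzw, hvz2]
end

section
/- Let s_a > s_b > 0, let ŵ ∈ F_{s_b} with ŵ ≠ 0, let w_a ∈ F_{s_a} minimize (1/2)‖w‖² over F_{s_a} with w_a ≠ 0, and set ρ = −‖w_a‖² + (1/2)⟨w_a, ŵ⟩. For an index i, set x̄_i^⊥ = x̄_i − (⟨x̄_i, w_a⟩/‖w_a‖²)·w_a and ℓ_i = −(⟨w_a, x̄_i⟩/‖w_a‖²)·ρ + (1/2)⟨ŵ, x̄_i⟩ − ‖x̄_i^⊥‖·√((1/4)‖ŵ‖² − ρ²/‖w_a‖²). Then for every s ∈ [s_b, s_a] and every w_s ∈ F_s minimizing (1/2)‖w‖² over F_s: if ⟨w_a, x̄_i⟩ > (2‖x̄_i‖/‖ŵ‖)·ρ and ℓ_i > 1, then ⟨w_s,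 x̄_i⟩ > 1. -/
open scoped RealInnerProductSpace

/-!
Both minimizers obey the variational inequality `0 ≤ ⟪w₀, w - w₀⟫` of a minimum-norm point of
the convex set `F_s`. For `w_a` (with `w = w_s ∈ F_s ⊆ F_{s_a}`) it puts `w_s` in the half-space
`⟪w_a, w⟫ ≥ ‖w_a‖²`; for `w_s` (with `w = ŵ ∈ F_{s_b} ⊆ F_s`) it puts `w_s` in the ball with
diameter `[0, ŵ]`. The number `ℓ_i` is the minimum of `⟪·, x̄_i⟫` over this ball cut by the
half-space: splitting along `w_a` reduces it to minimizing `A t - P √(r² - t²)` over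
`t₀ ≤ t ≤ r`, and the condition on `⟪w_a, x̄_i⟫` makes the Lagrange multiplier of the half-space
constraint nonnegative, so the minimum is attained at `t = t₀`.
-/

/- With `S = √(r² - t₀²)`, the quantity `A * S + P * t₀` is `S` times the Lagrange multiplier
of the half-space constraint `t₀ ≤ t`; the hypothesis `0 < r * A + t₀ * M` says that the
half-space excludes the minimizer of `A t - P s` over the disc `t² + s² ≤ r²`, at `t = -r A / M`. -/
theorem mul_sqrt_add_mul_nonneg {A P M r t₀ : ℝ} (hP : 0 ≤ P) (hM : 0 ≤ M)
    (hAPM : M ^ 2 = A ^ 2 + P ^ 2) (hr : 0 ≤ r) (ht₀ : t₀ ^ 2 ≤ r ^ 2)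
    (h : 0 < r * A + t₀ * M) : 0 ≤ A * √(r ^ 2 - t₀ ^ 2) + P * t₀ := by
  set S := √(r ^ 2 - t₀ ^ 2)
  have hS : 0 ≤ S := Real.sqrt_nonneg _
  have hS2 : S ^ 2 = r ^ 2 - t₀ ^ 2 := Real.sq_sqrt (by linarith)
  have key : (A * S + P * t₀) * (A * S - P * t₀) = (r * A + t₀ * M) * (r * A - t₀ * M) := by
    linear_combination A ^ 2 * hS2 + t₀ ^ 2 * hAPM
  by_contra! hneg
  rcases le_or_gt 0 A with hA | hA
  · have ht₀neg : t₀ < 0 := by nlinarith [mul_nonneg hA hS]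
    nlinarith [mul_nonneg hA hS, mul_nonneg hr hA, mul_nonneg hM (neg_nonneg.2 ht₀neg.le)]
  · have ht₀M : 0 < t₀ * M := by nlinarith
    have ht₀pos : 0 < t₀ := pos_of_mul_pos_left ht₀M hM
    have hAS : A * S - P * t₀ ≤ 0 := by nlinarith [mul_nonneg hP ht₀pos.le]
    nlinarith [mul_nonneg_of_nonpos_of_nonpos hneg.le hAS,
      mul_pos h (by nlinarith : 0 < t₀ * M - r * A)]

theorem mul_sub_mul_sqrt_le {A P r t₀ t s : ℝ} (hP : 0 ≤ P) (ht₀ : -r < t₀)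
    (hg : 0 ≤ A * √(r ^ 2 - t₀ ^ 2) + P * t₀) (ht : t₀ ≤ t) (hts : t ^ 2 + s ^ 2 ≤ r ^ 2) :
    A * t₀ - P * √(r ^ 2 - t₀ ^ 2) ≤ A * t - P * s := by
  have ht₀r : t₀ ≤ r := by nlinarith
  set S := √(r ^ 2 - t₀ ^ 2)
  have hS2 : S ^ 2 = r ^ 2 - t₀ ^ 2 := Real.sq_sqrt (by nlinarith)
  rcases ht₀r.eq_or_lt with ht₀r | ht₀r
  · have ht : t = r := by nlinarith
    have hs : s = 0 := by nlinarith
    rw [ht, hs, ← ht₀r]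
    linarith [mul_nonneg hP (Real.sqrt_nonneg (r ^ 2 - t₀ ^ 2))]
  · have hS : 0 < S := Real.sqrt_pos.2 (by nlinarith)
    -- weak duality: multiplier times half-space slack plus `P` times disc slack
    have key : S * ((A * t - P * s) - (A * t₀ - P * S)) = (A * S + P * t₀) * (t - t₀)
        + P * ((t - t₀) ^ 2 + (s - S) ^ 2 + (r ^ 2 - t ^ 2 - s ^ 2)) / 2 := by
      linear_combination (P / 2) * hS2
    have hsum : 0 ≤ (t - t₀) ^ 2 + (s - S) ^ 2 + (r ^ 2 - t ^ 2 - s ^ 2) := by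
      nlinarith [sq_nonneg (t - t₀), sq_nonneg (s - S)]
    have : 0 ≤ S * ((A * t - P * s) - (A * t₀ - P * S)) := by
      rw [key]
      exact add_nonneg (mul_nonneg hg (sub_nonneg.2 ht)) (div_nonneg (mul_nonneg hP hsum) two_pos.le)
    linarith [(mul_nonneg_iff_of_pos_left hS).1 this]

section

variable {F : Type*} [NormedAddCommGroup F] [InnerProductSpace ℝ F] {ι : Type*} [Fintype ι]

def hingeLoss (xbar : ι → F) (w : F) : ℝ :=
  ∑ j, max (1 - ⟪w, xbar j⟫) 0

theorem convexOn_hingeLoss (xbar : ι → F) :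
    ConvexOn ℝ Set.univ (hingeLoss xbar) := by
  have hsum : hingeLoss xbar = ∑ j, fun w => max (1 - ⟪w, xbar j⟫) 0 := by
    ext w
    simp [hingeLoss]
  rw [hsum]
  refine Finset.sum_induction _ (ConvexOn ℝ Set.univ) (fun _ _ hf hg => hf.add hg)
    (convexOn_const 0 convex_univ) fun j _ => ?_
  have hinner : ConcaveOn ℝ Set.univ fun w : F => ⟪w, xbar j⟫ :=
    ((innerₛₗ ℝ (xbar j)).concaveOn convex_univ).congr fun w _ => real_inner_comm _ _
  exact ((convexOn_const 1 convex_univ).sub hinner).sup (convexOn_const 0 convex_univ)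

theorem convex_setOf_hingeLoss_le (xbar : ι → F) (s : ℝ) :
    Convex ℝ {w | hingeLoss xbar w ≤ s} := by
  simpa using (convexOn_hingeLoss xbar).convex_le s

theorem real_inner_sub_nonneg_of_forall_norm_le {K : Set F} (hK : Convex ℝ K) {v : F}
    (hv : v ∈ K) (hmin : ∀ w ∈ K, ‖v‖ ≤ ‖w‖) {w : F} (hw : w ∈ K) : 0 ≤ ⟪v, w - v⟫ := by
  have hinf : ‖0 - v‖ = ⨅ w : K, ‖0 - (w : F)‖ := by
    have : Nonempty K := ⟨⟨v, hv⟩⟩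
    simp only [zero_sub, norm_neg]
    exact le_antisymm (le_ciInf fun w => hmin w w.2)
      (ciInf_le (f := fun w : K => ‖(w : F)‖) ⟨0, by rintro _ ⟨w, rfl⟩; positivity⟩ ⟨v, hv⟩)
  simpa [inner_neg_left] using (norm_eq_iInf_iff_real_inner_le_zero hK hv).1 hinf w hw

theorem norm_sub_half_smul_le_of_real_inner_sub_nonneg {v w : F} (h : 0 ≤ ⟪w, v - w⟫) :
    ‖w - (1 / 2 : ℝ) • v‖ ≤ ‖v‖ / 2 := by
  have hsq : ‖w - (1 / 2 : ℝ) • v‖ ^ 2 = (‖v‖ / 2) ^ 2 - ⟪w, v - w⟫ := by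
    rw [norm_sub_sq_real, inner_sub_right, real_inner_smul_right, norm_smul,
      real_inner_self_eq_norm_sq]
    norm_num
    ring
  exact (sq_le_sq₀ (norm_nonneg _) (by positivity)).1 (by linarith)

theorem real_inner_eq_mul_add_inner_sub_smul {e : F} (he : ‖e‖ = 1) (u x : F) :
    ⟪u, x⟫ = ⟪e, u⟫ * ⟪e, x⟫ + ⟪u - ⟪e, u⟫ • e, x - ⟪e, x⟫ • e⟫ := by
  simp only [inner_sub_left, inner_sub_right, real_inner_smul_left, real_inner_smul_right,
    real_inner_self_eq_norm_sq, he, real_inner_comm e u]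
  ring

theorem mul_sub_mul_sqrt_le_real_inner {e u x : F} {r t₀ : ℝ} (he : ‖e‖ = 1) (hu : ‖u‖ ≤ r)
    (ht₀ : t₀ ≤ ⟪e, u⟫) (hx : 0 < r * ⟪e, x⟫ + t₀ * ‖x‖) :
    ⟪e, x⟫ * t₀ - ‖x - ⟪e, x⟫ • e‖ * √(r ^ 2 - t₀ ^ 2) ≤ ⟪u, x⟫ := by
  set A := ⟪e, x⟫
  set t := ⟪e, u⟫
  have hr : 0 ≤ r := (norm_nonneg u).trans hu
  have hux := real_inner_eq_mul_add_inner_sub_smul he u x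
  have huu := real_inner_eq_mul_add_inner_sub_smul he u u
  have hxx := real_inner_eq_mul_add_inner_sub_smul he x x
  simp only [real_inner_self_eq_norm_sq] at huu hxx
  have hts : t ^ 2 + ‖u - t • e‖ ^ 2 ≤ r ^ 2 := by
    nlinarith [norm_nonneg u]
  have hAx : |A| ≤ ‖x‖ := by
    simpa [A, he] using abs_real_inner_le_norm e x
  have ht₀r : -r < t₀ := by
    by_contra! h
    nlinarith [abs_le.1 hAx, norm_nonneg x]
  have htr : t ≤ r := by
    simpa [he] using (real_inner_le_norm e u).trans (by rwa [he, one_mul])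
  have ht₀r' : t₀ ^ 2 ≤ r ^ 2 := by nlinarith
  have hg := mul_sqrt_add_mul_nonneg (norm_nonneg (x - A • e)) (norm_nonneg x)
    (by rw [hxx]; ring) hr ht₀r' hx
  have hperp : -(‖u - t • e‖ * ‖x - A • e‖) ≤ ⟪u - t • e, x - A • e⟫ :=
    (abs_le.1 (abs_real_inner_le_norm _ _)).1
  have := mul_sub_mul_sqrt_le (norm_nonneg _) ht₀r hg ht₀ hts
  linarith

theorem neg_div_mul_sub_norm_mul_sqrt_le_real_inner {a u x : F} {r ρ : ℝ} (ha : a ≠ 0)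
    (hu : ‖u‖ ≤ r) (hρ : -ρ ≤ ⟪a, u⟫) (hx : ‖x‖ * ρ < r * ⟪a, x⟫) :
    -(⟪a, x⟫ / ‖a‖ ^ 2) * ρ - ‖x - (⟪x, a⟫ / ‖a‖ ^ 2) • a‖ * √(r ^ 2 - ρ ^ 2 / ‖a‖ ^ 2)
      ≤ ⟪u, x⟫ := by
  have hna : 0 < ‖a‖ := norm_pos_iff.2 ha
  have he : ‖‖a‖⁻¹ • a‖ = 1 := norm_smul_inv_norm ha
  have hinner (v : F) : ⟪‖a‖⁻¹ • a, v⟫ = ⟪a, v⟫ / ‖a‖ := by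
    rw [real_inner_smul_left, inv_mul_eq_div]
  have h := mul_sub_mul_sqrt_le_real_inner (x := x) (t₀ := -ρ / ‖a‖) he hu
    (by rw [hinner]; gcongr)
    (by rw [hinner]; field_simp; linarith)
  have hproj : (⟪x, a⟫ / ‖a‖ ^ 2) • a = ⟪‖a‖⁻¹ • a, x⟫ • ‖a‖⁻¹ • a := by
    rw [hinner, smul_smul, real_inner_comm]
    field_simp
  have hcoef : -(⟪a, x⟫ / ‖a‖ ^ 2) * ρ = ⟪‖a‖⁻¹ • a, x⟫ * (-ρ / ‖a‖) := by
    rw [hinner]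
    field_simp
  rwa [hproj, hcoef, show ρ ^ 2 / ‖a‖ ^ 2 = (-ρ / ‖a‖) ^ 2 by ring]
end

theorem essnsv_screening_rule_general (n l : ℕ)
    (xbar : Fin l → EuclideanSpace ℝ (Fin n))
    (sa sb : ℝ)
    (what : EuclideanSpace ℝ (Fin n)) (hwhat_ne : what ≠ 0)
    (hwhat_feas : ∑ i, max (1 - ⟪what, xbar i⟫) 0 ≤ sb)
    (wa : EuclideanSpace ℝ (Fin n)) (hwa_ne : wa ≠ 0)
    (hwa_feas : ∑ i, max (1 - ⟪wa, xbar i⟫) 0 ≤ sa)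
    (hwa_min : ∀ w : EuclideanSpace ℝ (Fin n),
      ∑ i, max (1 - ⟪w, xbar i⟫) 0 ≤ sa → (1/2) * ‖wa‖^2 ≤ (1/2) * ‖w‖^2)
    (ρ : ℝ) (hρ : ρ = -‖wa‖^2 + (1/2) * ⟪wa, what⟫)
    (i : Fin l)
    (xperp : EuclideanSpace ℝ (Fin n))
    (hxperp : xperp = xbar i - (⟪xbar i, wa⟫ / ‖wa‖^2) • wa)
    (ℓi : ℝ)
    (hℓi : ℓi = -(⟪wa, xbar i⟫ / ‖wa‖^2) * ρ + (1/2) * ⟪what, xbar i⟫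
      - ‖xperp‖ * Real.sqrt ((1/4) * ‖what‖^2 - ρ^2 / ‖wa‖^2)) :
    ∀ s : ℝ, sb ≤ s → s ≤ sa →
      ∀ ws : EuclideanSpace ℝ (Fin n),
        ∑ j, max (1 - ⟪ws, xbar j⟫) 0 ≤ s →
        (∀ w : EuclideanSpace ℝ (Fin n),
          ∑ j, max (1 - ⟪w, xbar j⟫) 0 ≤ s → (1/2) * ‖ws‖^2 ≤ (1/2) * ‖w‖^2) →
        ⟪wa, xbar i⟫ > (2 * ‖xbar i‖ / ‖what‖) * ρ → ℓi > 1 →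
        ⟪ws, xbar i⟫ > 1 := by
  intro s hsbs hssa ws hws_feas hws_min hgeom hℓ
  have hnorm {v w : EuclideanSpace ℝ (Fin n)} (h : 1 / 2 * ‖v‖ ^ 2 ≤ 1 / 2 * ‖w‖ ^ 2) :
      ‖v‖ ≤ ‖w‖ :=
    (sq_le_sq₀ (norm_nonneg _) (norm_nonneg _)).1 (by linarith)
  have hwa_opt : 0 ≤ ⟪wa, ws - wa⟫ :=
    real_inner_sub_nonneg_of_forall_norm_le (convex_setOf_hingeLoss_le xbar sa) hwa_feas
      (fun w hw => hnorm (hwa_min w hw)) (hws_feas.trans hssa)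
  have hws_opt : 0 ≤ ⟪ws, what - ws⟫ :=
    real_inner_sub_nonneg_of_forall_norm_le (convex_setOf_hingeLoss_le xbar s) hws_feas
      (fun w hw => hnorm (hws_min w hw)) (hwhat_feas.trans hsbs)
  have hhalf : -ρ ≤ ⟪wa, ws - (1 / 2 : ℝ) • what⟫ := by
    rw [inner_sub_right, real_inner_self_eq_norm_sq] at hwa_opt
    rw [inner_sub_right, real_inner_smul_right, hρ]
    linarith
  have hgeom' : ‖xbar i‖ * ρ < ‖what‖ / 2 * ⟪wa, xbar i⟫ := by
    have hw : 0 < ‖what‖ := norm_pos_iff.2 hwhat_ne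
    rw [gt_iff_lt, div_mul_eq_mul_div, div_lt_iff₀ hw] at hgeom
    linarith
  have hbound := neg_div_mul_sub_norm_mul_sqrt_le_real_inner hwa_ne
    (norm_sub_half_smul_le_of_real_inner_sub_nonneg hws_opt) hhalf hgeom'
  rw [inner_sub_left, real_inner_smul_left, ← hxperp,
    show (‖what‖ / 2) ^ 2 = 1 / 4 * ‖what‖ ^ 2 by ring] at hbound
  linarith

/-- Theorem 18, rule (R1), of the paper — enhanced SSNSV: With
`F_s = {w : ∑ᵢ max(1 - ⟨w, x̄ᵢ⟩, 0) ≤ s}`, `s_a > s_b > 0`, `ŵ ∈ F_{s_b}` (`ŵ ≠ 0`),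
`w_a` the minimizer of `(1/2)‖w‖²` over `F_{s_a}` (`w_a ≠ 0`),
`ρ = -‖w_a‖² + (1/2)⟨w_a, ŵ⟩`, `x̄ᵢ^⊥ = x̄ᵢ - (⟨x̄ᵢ,w_a⟩/‖w_a‖²)w_a` and
`ℓᵢ = -(⟨w_a,x̄ᵢ⟩/‖w_a‖²)ρ + (1/2)⟨ŵ,x̄ᵢ⟩ - ‖x̄ᵢ^⊥‖√((1/4)‖ŵ‖² - ρ²/‖w_a‖²)`:
for every `s ∈ [s_b, s_a]` and every minimizer `w_s` of `(1/2)‖w‖²` over `F_s`,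
if `⟨w_a, x̄ᵢ⟩ > (2‖x̄ᵢ‖/‖ŵ‖)ρ` and `ℓᵢ > 1`, then `⟨w_s, x̄ᵢ⟩ > 1`. -/
theorem essnsv_screening_rule (n l : ℕ) (hn : 1 ≤ n) (hl : 1 ≤ l)
    (x : Fin l → EuclideanSpace ℝ (Fin n)) (y : Fin l → ℝ)
    (hy : ∀ i, y i = 1 ∨ y i = -1)
    (xbar : Fin l → EuclideanSpace ℝ (Fin n)) (hxbar : ∀ i, xbar i = y i • x i)
    (sa sb : ℝ) (hsb : 0 < sb) (hsab : sb < sa)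
    (what : EuclideanSpace ℝ (Fin n)) (hwhat_ne : what ≠ 0)
    (hwhat_feas : ∑ i, max (1 - ⟪what, xbar i⟫) 0 ≤ sb)
    (wa : EuclideanSpace ℝ (Fin n)) (hwa_ne : wa ≠ 0)
    (hwa_feas : ∑ i, max (1 - ⟪wa, xbar i⟫) 0 ≤ sa)
    (hwa_min : ∀ w : EuclideanSpace ℝ (Fin n),
      ∑ i, max (1 - ⟪w, xbar i⟫) 0 ≤ sa → (1/2) * ‖wa‖^2 ≤ (1/2) * ‖w‖^2)
    (ρ : ℝ) (hρ : ρ = -‖wa‖^2 + (1/2) * ⟪wa, what⟫)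
    (i : Fin l)
    (xperp : EuclideanSpace ℝ (Fin n))
    (hxperp : xperp = xbar i - (⟪xbar i, wa⟫ / ‖wa‖^2) • wa)
    (ℓi : ℝ)
    (hℓi : ℓi = -(⟪wa, xbar i⟫ / ‖wa‖^2) * ρ + (1/2) * ⟪what, xbar i⟫
      - ‖xperp‖ * Real.sqrt ((1/4) * ‖what‖^2 - ρ^2 / ‖wa‖^2)) :
    ∀ s : ℝ, sb ≤ s → s ≤ sa →
      ∀ ws : EuclideanSpace ℝ (Fin n),
        ∑ j, max (1 - ⟪ws, xbar j⟫) 0 ≤ s →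
        (∀ w : EuclideanSpace ℝ (Fin n),
          ∑ j, max (1 - ⟪w, xbar j⟫) 0 ≤ s → (1/2) * ‖ws‖^2 ≤ (1/2) * ‖w‖^2) →
        ⟪wa, xbar i⟫ > (2 * ‖xbar i‖ / ‖what‖) * ρ → ℓi > 1 →
        ⟪ws, xbar i⟫ > 1 :=
  essnsv_screening_rule_general n l xbar sa sb what hwhat_ne hwhat_feas wa hwa_ne hwa_feas hwa_min ρ
    hρ i xperp hxperp ℓi hℓi
end
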